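/- arXiv:1812.01549 — 7 statements merged into one kernel-verified Lean document; each statement's English description precedes it below -/
import Mathlib

section
/- Let X and Y be linear orders on subsets of ℕ. If X is a well order, then both X*Y and Y*X (the Kleene–Brouwer orderings of the double descent trees T(X,Y) and T(Y,X)) are well orders. -/
/-- A tree on ℕ: a set of finite sequences of naturals closed under initial segments. -/
def IsTree (T : Set (List ℕ)) : Prop :=
  ∀ s ∈ T, ∀ t : List ℕ, t <+: s → t ∈ T

/-- `x : ℕ → ℕ` is a branch of `T`: all of its finite initial segments belong to `T`. -/
def IsBranch (T : Set (List ℕ)) (x : ℕ → ℕ) : Prop :=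
  ∀ n : ℕ, (List.range n).map x ∈ T

/-- `[T]`, the set of branches of `T`. -/
def Branches (T : Set (List ℕ)) : Set (ℕ → ℕ) := {x | IsBranch T x}

/-- The Kleene–Brouwer ordering on finite sequences of naturals: `s <_KB t` iff
`t` is a proper initial segment of `s`, or at the first position where `s` and `t`
differ, the entry of `s` is smaller. -/
def KB (s t : List ℕ) : Prop :=
  (t <+: s ∧ t ≠ s) ∨
    ∃ i, i < s.length ∧ i < t.length ∧ (∀ j, j < i → s.getD j 0 = t.getD j 0) ∧
      s.getD i 0 < t.getD i 0

/-- `r` is a strict linear order on the set `X`. -/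
def IsLinOrdOn {α : Type*} (X : Set α) (r : α → α → Prop) : Prop :=
  (∀ a ∈ X, ∀ b ∈ X, ∀ c ∈ X, r a b → r b c → r a c) ∧
  (∀ a ∈ X, ¬r a a) ∧
  (∀ a ∈ X, ∀ b ∈ X, r a b ∨ a = b ∨ r b a)

/-- `r` is a well order on the set `X`: a strict linear order on `X` that is
well-founded on `X`. -/
def IsWellOrdOn {α : Type*} (X : Set α) (r : α → α → Prop) : Prop :=
  IsLinOrdOn X r ∧ WellFounded (Subrel r X)

/-- The double descent tree `T(X,Y)` of two linear orders on subsets of ℕ: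
finite sequences of (coded) pairs `(m_i, n_i)` with the `m_i` strictly descending
in `X` and the `n_i` strictly descending in `Y`.  Pairs are coded by `Nat.pair`. -/
def DDT (X Y : Set ℕ) (rX rY : ℕ → ℕ → Prop) : Set (List ℕ) :=
  {l | (∀ i, i < l.length → (Nat.unpair (l.getD i 0)).1 ∈ X ∧ (Nat.unpair (l.getD i 0)).2 ∈ Y) ∧
       (∀ i, i + 1 < l.length →
         rX (Nat.unpair (l.getD (i + 1) 0)).1 (Nat.unpair (l.getD i 0)).1 ∧
         rY (Nat.unpair (l.getD (i + 1) 0)).2 (Nat.unpair (l.getD i 0)).2)}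

/-!
Pad a finite sequence with `⊤` to an `ℕ`-indexed sequence in `WithTop ℕ`; this turns `<_KB`
into the lexicographic order, which is linear. Along a KB-descending sequence of nodes every
finite block of coordinates is antitone in a finite lexicographic product of well-orders, hence
eventually constant. The limit values are finite (otherwise the sequence would itself be
eventually constant), so they form a branch of any tree containing the nodes. A branch of
`T(X, Y)` is an infinite descending sequence in `X` and in `Y`.
-/

open Filter

/-- `WithTop ℕ` is `Option ℕ`, so `l[i]?` is `l i` inside the list and `⊤` past its end. -/
def topPad (l : List ℕ) (i : ℕ) : WithTop ℕ := l[i]?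

lemma topPad_eq_top_iff {l : List ℕ} {i : ℕ} : topPad l i = ⊤ ↔ l.length ≤ i :=
  List.getElem?_eq_none_iff

lemma topPad_of_lt {l : List ℕ} {i : ℕ} (h : i < l.length) : topPad l i = l[i] :=
  List.getElem?_eq_getElem h

lemma topPad_injective : Function.Injective topPad :=
  fun _ _ h => List.ext_getElem? (congrFun h)

lemma topPad_eq_of_isPrefix {s l : List ℕ} (h : s <+: l) {i : ℕ} (hi : i < s.length) :
    topPad l i = topPad s i :=
  (List.prefix_iff_getElem?.1 h i hi).trans (topPad_of_lt hi).symm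

lemma kb_iff_toLex_topPad_lt {s t : List ℕ} :
    KB s t ↔ toLex (topPad s) < toLex (topPad t) := by
  have getD_eq {l : List ℕ} {i : ℕ} (hi : i < l.length) :
      topPad l i = (l.getD i 0 : WithTop ℕ) := by
    rw [List.getD_eq_getElem _ _ hi, topPad_of_lt hi]
  change _ ↔ ∃ i, (∀ j < i, topPad s j = topPad t j) ∧ topPad s i < topPad t i
  constructor
  · rintro (⟨hts, hne⟩ | ⟨i, his, hit, hagree, hlt⟩)
    · have hlen : t.length < s.length :=
        hts.length_le.lt_of_ne fun h => hne (hts.eq_of_length h)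
      refine ⟨t.length, fun j hj => topPad_eq_of_isPrefix hts hj, ?_⟩
      rw [topPad_of_lt hlen, topPad_eq_top_iff.2 le_rfl]
      exact WithTop.coe_lt_top _
    · refine ⟨i, fun j hj => ?_, ?_⟩
      · rw [getD_eq (hj.trans his), getD_eq (hj.trans hit), hagree j hj]
      · rw [getD_eq his, getD_eq hit]
        exact_mod_cast hlt
  · rintro ⟨i, hagree, hlt⟩
    have his : i < s.length :=
      not_le.1 fun h => not_top_lt (topPad_eq_top_iff.2 h ▸ hlt)
    by_cases hit : i < t.length
    · rw [getD_eq his, getD_eq hit] at hlt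
      refine Or.inr ⟨i, his, hit, fun j hj => ?_, by exact_mod_cast hlt⟩
      have := hagree j hj
      rw [getD_eq (hj.trans his), getD_eq (hj.trans hit)] at this
      exact_mod_cast this
    · have hti : t.length ≤ i := not_lt.1 hit
      refine Or.inl ⟨List.prefix_iff_getElem?.2 fun j hj => ?_, fun h => hit (h ▸ his)⟩
      exact (hagree j (hj.trans_le hti)).trans (topPad_of_lt hj)

lemma isLinOrdOn_kb (T : Set (List ℕ)) : IsLinOrdOn T KB := by
  simp only [IsLinOrdOn, kb_iff_toLex_topPad_lt]
  refine ⟨fun _ _ _ _ _ _ => lt_trans, fun _ _ => lt_irrefl _, fun s _ t _ => ?_⟩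
  rcases lt_trichotomy (toLex (topPad s)) (toLex (topPad t)) with h | h | h
  exacts [Or.inl h, Or.inr (Or.inl (topPad_injective (toLex.injective h))), Or.inr (Or.inr h)]

lemma monotone_toLex_comp_val {α : Type*} [LinearOrder α] (k : ℕ) :
    Monotone fun x : Lex (ℕ → α) => toLex (ofLex x ∘ Fin.val : Fin k → α) := by
  intro x y hxy
  rcases hxy.lt_or_eq with ⟨i, hagree, hlt⟩ | rfl
  · by_cases hik : i < k
    · exact le_of_lt ⟨⟨i, hik⟩, fun j hj => hagree j hj, hlt⟩
    · exact le_of_eq (congrArg toLex (funext fun j => hagree j (by omega)))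
  · exact le_rfl

lemma exists_eventually_apply_eq_of_antitone {α : Type*} [LinearOrder α] [WellFoundedLT α]
    {g : ℕ → Lex (ℕ → α)} (hg : Antitone g) (j : ℕ) :
    ∃ a, ∀ᶠ n in atTop, ofLex (g n) j = a := by
  obtain ⟨N, hN⟩ := WellFoundedLT.antitone_chain_condition
    ((monotone_toLex_comp_val (j + 1)).comp_antitone hg)
  exact ⟨ofLex (g N) j,
    eventually_atTop.2 ⟨N, fun n hn => (congrFun (hN n hn) (Fin.last j)).symm⟩⟩

lemma exists_forall_exists_prefix_of_kb_descending {f : ℕ → List ℕ}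
    (hf : ∀ n, KB (f (n + 1)) (f n)) :
    ∃ x : ℕ → ℕ, ∀ k, ∃ n, (List.range k).map x <+: f n := by
  have hanti : StrictAnti fun n => toLex (topPad (f n)) :=
    strictAnti_nat_of_succ_lt fun n => kb_iff_toLex_topPad_lt.1 (hf n)
  choose h hh using exists_eventually_apply_eq_of_antitone hanti.antitone
  have hblock (k : ℕ) : ∀ᶠ n in atTop, ∀ j ≤ k, topPad (f n) j = h j :=
    (eventually_all_finite (Set.finite_Iic k)).2 fun j _ => hh j
  have hfin (k : ℕ) : h k ≠ ⊤ := by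
    intro hk
    obtain ⟨N, hN⟩ := eventually_atTop.1 (hblock k)
    -- from `N` on, every `f n` has length at most `k` and the same first `k` entries
    have hconst : topPad (f (N + 1)) = topPad (f N) := by
      funext j
      rcases le_or_gt j k with hj | hj
      · rw [hN (N + 1) N.le_succ j hj, hN N le_rfl j hj]
      · have hlen (n : ℕ) (hn : N ≤ n) : (f n).length ≤ j :=
          (topPad_eq_top_iff.1 ((hN n hn k le_rfl).trans hk)).trans hj.le
        rw [topPad_eq_top_iff.2 (hlen _ N.le_succ), topPad_eq_top_iff.2 (hlen N le_rfl)]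
    exact (hanti N.lt_succ_self).ne (congrArg toLex hconst)
  refine ⟨fun j => (h j).untop (hfin j), fun k => ?_⟩
  obtain ⟨n, hn⟩ := (hblock k).exists
  refine ⟨n, List.prefix_iff_getElem?.2 fun j hj => ?_⟩
  simp only [List.length_map, List.length_range] at hj
  rw [List.getElem_map, List.getElem_range]
  exact (hn j hj.le).trans (WithTop.coe_untop _ _).symm

lemma wellFounded_kb_of_branches_eq_empty {T : Set (List ℕ)} (hT : IsTree T)
    (hB : Branches T = ∅) : WellFounded (Subrel KB T) := by
  refine wellFounded_iff_isEmpty_descending_chain.2 ⟨fun ⟨f, hf⟩ => ?_⟩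
  obtain ⟨x, hx⟩ := exists_forall_exists_prefix_of_kb_descending (f := fun n => (f n).1) hf
  refine hB.subset (fun k => ?_ : x ∈ Branches T)
  obtain ⟨n, hn⟩ := hx k
  exact hT _ (f n).2 _ hn

lemma not_forall_mem_and_rel_succ {α : Type*} {r : α → α → Prop} {s : Set α}
    (hwf : WellFounded (Subrel r s)) (u : ℕ → α) :
    ¬∀ n, u n ∈ s ∧ r (u (n + 1)) (u n) := fun hu =>
  (wellFounded_iff_isEmpty_descending_chain.1 hwf).false
    ⟨fun n => ⟨u n, (hu n).1⟩, fun n => (hu n).2⟩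

lemma isTree_DDT (X Y : Set ℕ) (rX rY : ℕ → ℕ → Prop) : IsTree (DDT X Y rX rY) := by
  rintro l ⟨hmem, hdesc⟩ s hs
  have hget {i : ℕ} (hi : i < s.length) : s.getD i 0 = l.getD i 0 := by
    simp only [List.getD_eq_getElem?_getD, List.prefix_iff_getElem?.1 hs i hi,
      List.getElem?_eq_getElem hi]
  have hlen := hs.length_le
  refine ⟨fun i hi => hget hi ▸ hmem i (by omega), fun i hi => ?_⟩
  rw [hget hi, hget (Nat.lt_of_succ_lt hi)]
  exact hdesc i (by omega)

section DDT

variable {X Y : Set ℕ} {rX rY : ℕ → ℕ → Prop} {x : ℕ → ℕ}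

lemma IsBranch.mem_DDT (hx : IsBranch (DDT X Y rX rY) x) (j : ℕ) :
    (x j).unpair.1 ∈ X ∧ (x j).unpair.2 ∈ Y := by
  simpa using (hx (j + 1)).1 j (by simp)

lemma IsBranch.rel_DDT (hx : IsBranch (DDT X Y rX rY) x) (j : ℕ) :
    rX (x (j + 1)).unpair.1 (x j).unpair.1 ∧ rY (x (j + 1)).unpair.2 (x j).unpair.2 := by
  simpa using (hx (j + 2)).2 j (by simp)

lemma branches_DDT_eq_empty_of_left (hX : WellFounded (Subrel rX X)) :
    Branches (DDT X Y rX rY) = ∅ :=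
  Set.eq_empty_of_forall_notMem fun _ hx =>
    not_forall_mem_and_rel_succ hX _ fun n => ⟨(hx.mem_DDT n).1, (hx.rel_DDT n).1⟩

lemma branches_DDT_eq_empty_of_right (hY : WellFounded (Subrel rY Y)) :
    Branches (DDT X Y rX rY) = ∅ :=
  Set.eq_empty_of_forall_notMem fun _ hx =>
    not_forall_mem_and_rel_succ hY _ fun n => ⟨(hx.mem_DDT n).2, (hx.rel_DDT n).2⟩

end DDT

theorem star_wellOrdered_of_left_wellOrdered_general (X Y : Set ℕ) (rX rY : ℕ → ℕ → Prop)
    (hX : IsWellOrdOn X rX) :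
    IsWellOrdOn (DDT X Y rX rY) KB ∧ IsWellOrdOn (DDT Y X rY rX) KB :=
  ⟨⟨isLinOrdOn_kb _, wellFounded_kb_of_branches_eq_empty (isTree_DDT _ _ _ _)
      (branches_DDT_eq_empty_of_left hX.2)⟩,
    ⟨isLinOrdOn_kb _, wellFounded_kb_of_branches_eq_empty (isTree_DDT _ _ _ _)
      (branches_DDT_eq_empty_of_right hX.2)⟩⟩

/-- If `X` is a well order (and `Y` a linear order) on subsets of ℕ,
then both `X*Y` and `Y*X` (the Kleene–Brouwer orderings of the double descent trees)
are well orders. -/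
theorem star_wellOrdered_of_left_wellOrdered (X Y : Set ℕ) (rX rY : ℕ → ℕ → Prop)
    (hX : IsWellOrdOn X rX) (hY : IsLinOrdOn Y rY) :
    IsWellOrdOn (DDT X Y rX rY) KB ∧ IsWellOrdOn (DDT Y X rY rX) KB :=
  star_wellOrdered_of_left_wellOrdered_general X Y rX rY hX
end

section
/- Let X be a linear order on a subset of ℕ and Y a well order on a subset of ℕ. Then both X*Y and ℚ_q*Y are well orders, and |X*Y| ≤ |ℚ_q*Y|. -/
/-!
The Kleene–Brouwer order is the lexicographic order in which a sequence lies below its proper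
initial segments: `a :: s <_KB b :: t` iff `a < b`, or `a = b` and `s <_KB t`. Restricted to
sequences that descend in a well-founded relation it is an ordinal sum, indexed by the first entry,
of orders of the same kind with a smaller bound, followed by the empty sequence; induction on the
bound shows it is well-founded. This covers `T(X,Y)`, whose second coordinates descend in `Y`.

For the embedding, each node's children are relabelled by a strictly increasing map on codes that
keeps the `Y`-coordinate and replaces the first coordinate by a number whose rational value lies
below that of the parent. As `q` is onto, infinitely many numbers are available below any rational,
so such a map exists; it preserves `<_KB` because `<_KB` compares codes one level at a time.
-/

namespace KB

theorem not_nil_left (t : List ℕ) : ¬ KB [] t := by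
  rintro (⟨h, hne⟩ | ⟨i, hi, -⟩)
  · exact hne (List.prefix_nil.1 h)
  · exact Nat.not_lt_zero i hi

theorem nil_right_iff (s : List ℕ) : KB s [] ↔ s ≠ [] := by
  refine ⟨?_, fun h => Or.inl ⟨List.nil_prefix, h.symm⟩⟩
  rintro (⟨-, hne⟩ | ⟨i, -, hi, -⟩)
  · exact hne.symm
  · exact absurd hi (Nat.not_lt_zero i)

theorem cons_cons_iff {a b : ℕ} {s t : List ℕ} :
    KB (a :: s) (b :: t) ↔ a < b ∨ a = b ∧ KB s t := by
  constructor
  · rintro (⟨hpre, hne⟩ | ⟨_ | i, hs, ht, hagree, hlt⟩)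
    · obtain ⟨rfl, htail⟩ := List.cons_prefix_cons.1 hpre
      exact Or.inr ⟨rfl, Or.inl ⟨htail, fun h => hne (h ▸ rfl)⟩⟩
    · exact Or.inl hlt
    · refine Or.inr ⟨hagree 0 i.succ_pos, Or.inr ⟨i, Nat.lt_of_succ_lt_succ hs,
        Nat.lt_of_succ_lt_succ ht, fun j hj => hagree (j + 1) (Nat.succ_lt_succ hj), hlt⟩⟩
  · rintro (hlt | ⟨rfl, ⟨hpre, hne⟩ | ⟨i, hs, ht, hagree, hlt⟩⟩)
    · exact Or.inr ⟨0, by simp, by simp, fun j hj => absurd hj (Nat.not_lt_zero j), hlt⟩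
    · exact Or.inl ⟨List.cons_prefix_cons.2 ⟨rfl, hpre⟩, fun h => hne (List.cons_injective h)⟩
    · refine Or.inr ⟨i + 1, Nat.succ_lt_succ hs, Nat.succ_lt_succ ht, fun j hj => ?_, hlt⟩
      cases j with
      | zero => rfl
      | succ j => exact hagree j (Nat.lt_of_succ_lt_succ hj)

theorem irrefl (s : List ℕ) : ¬ KB s s := by
  induction s with
  | nil => exact not_nil_left []
  | cons a s ih => simpa [cons_cons_iff] using ih

theorem trans {s t u : List ℕ} (hst : KB s t) (htu : KB t u) : KB s u := by
  induction s generalizing t u with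
  | nil => exact absurd hst (not_nil_left t)
  | cons a s ih =>
    rcases t with _ | ⟨b, t⟩
    · exact absurd htu (not_nil_left u)
    rcases u with _ | ⟨c, u⟩
    · exact (nil_right_iff _).2 (List.cons_ne_nil a s)
    rw [cons_cons_iff] at hst htu ⊢
    rcases hst with hab | ⟨rfl, hst⟩ <;> rcases htu with hbc | ⟨rfl, htu⟩
    · exact Or.inl (hab.trans hbc)
    · exact Or.inl hab
    · exact Or.inl hbc
    · exact Or.inr ⟨rfl, ih hst htu⟩

theorem trichotomous (s t : List ℕ) : KB s t ∨ s = t ∨ KB t s := by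
  induction s generalizing t with
  | nil =>
    rcases t with _ | ⟨b, t⟩
    · exact Or.inr (Or.inl rfl)
    · exact Or.inr (Or.inr ((nil_right_iff _).2 (List.cons_ne_nil b t)))
  | cons a s ih =>
    rcases t with _ | ⟨b, t⟩
    · exact Or.inl ((nil_right_iff _).2 (List.cons_ne_nil a s))
    simp only [cons_cons_iff, List.cons.injEq]
    rcases lt_trichotomy a b with hab | rfl | hab
    · exact Or.inl (Or.inl hab)
    · rcases ih t with h | h | h <;> simp [h]
    · exact Or.inr (Or.inr (Or.inl hab))

instance : IsStrictTotalOrder (List ℕ) KB where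
  trichotomous s t hst hts := ((trichotomous s t).resolve_left hst).resolve_right hts
  irrefl := irrefl
  trans _ _ _ := trans

theorem isLinOrdOn (D : Set (List ℕ)) : IsLinOrdOn D KB :=
  ⟨fun _ _ _ _ _ _ => trans, fun s _ => irrefl s, fun s _ t _ => trichotomous s t⟩

theorem wellFoundedOn_of_forall_cons {P : ℕ → Prop} {F : ℕ → Set (List ℕ)}
    (hF : ∀ c, P c → (F c).WellFoundedOn KB) :
    {l | ∀ c t, l = c :: t → P c ∧ t ∈ F c}.WellFoundedOn KB := by
  set A := {l | ∀ c t, l = c :: t → P c ∧ t ∈ F c}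
  set R := fun s t => KB s t ∧ s ∈ A ∧ t ∈ A
  have acc_cons : ∀ c, P c → ∀ t ∈ F c, Acc R (c :: t) := by
    intro c
    induction c using Nat.strong_induction_on with
    | _ c ihc =>
    intro hc t ht
    induction t using (Set.wellFoundedOn_iff.1 (hF c hc)).induction with
    | _ t iht =>
    refine Acc.intro _ fun s ⟨hks, hsA, _⟩ => ?_
    rcases s with _ | ⟨d, u⟩
    · exact absurd hks (not_nil_left _)
    obtain ⟨hd, hu⟩ := hsA d u rfl
    rcases cons_cons_iff.1 hks with hdc | ⟨rfl, hut⟩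
    · exact ihc d hdc hd u hu
    · exact iht u ⟨hut, hu, ht⟩ hu
  have acc_of_ne_nil : ∀ s ∈ A, s ≠ [] → Acc R s := by
    rintro (_ | ⟨c, t⟩) hs hne
    · exact absurd rfl hne
    · exact acc_cons c (hs c t rfl).1 t (hs c t rfl).2
  rw [Set.wellFoundedOn_iff]
  refine ⟨fun l => Acc.intro l fun s ⟨_, hs, _⟩ => ?_⟩
  rcases s with _ | ⟨c, t⟩
  · exact Acc.intro [] fun s ⟨hs', hsA, _⟩ => acc_of_ne_nil s hsA ((nil_right_iff s).1 hs')
  · exact acc_of_ne_nil _ hs (List.cons_ne_nil c t)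

theorem wellFoundedOn_isChain_cons {r : ℕ → ℕ → Prop} (hr : WellFounded r) (a : ℕ) :
    {l | (a :: l).IsChain (flip r)}.WellFoundedOn KB := by
  induction a using hr.induction with
  | _ a ih =>
  refine (wellFoundedOn_of_forall_cons (P := (r · a)) ih).subset ?_
  rintro l hl c t rfl
  exact List.isChain_cons_cons.1 hl

theorem wellFoundedOn_isChain {r : ℕ → ℕ → Prop} (hr : WellFounded r) :
    {l | l.IsChain (flip r)}.WellFoundedOn KB :=
  (wellFoundedOn_of_forall_cons (P := fun _ => True) fun c _ =>
    wellFoundedOn_isChain_cons hr c).subset fun l hl c t h => ⟨trivial, by subst h; exact hl⟩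

end KB

namespace DDT

variable {X Y : Set ℕ} {rX rY : ℕ → ℕ → Prop}

theorem mem_iff {l : List ℕ} :
    l ∈ DDT X Y rX rY ↔ (∀ c ∈ l, c.unpair.1 ∈ X ∧ c.unpair.2 ∈ Y) ∧
      l.IsChain fun c d => rX d.unpair.1 c.unpair.1 ∧ rY d.unpair.2 c.unpair.2 := by
  simp only [DDT, Set.mem_ofPred_eq, List.forall_mem_iff_getElem, List.isChain_iff_getElem]
  refine and_congr (forall_congr' fun i => ?_) (forall_congr' fun i => ?_)
  · exact forall_congr' fun hi => by rw [List.getD_eq_getElem _ _ hi]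
  · exact forall_congr' fun hi => by
      rw [List.getD_eq_getElem _ _ hi, List.getD_eq_getElem _ _ (Nat.lt_of_succ_lt hi)]

theorem cons_mem_iff {c : ℕ} {l : List ℕ} :
    c :: l ∈ DDT X Y rX rY ↔ (c.unpair.1 ∈ X ∧ c.unpair.2 ∈ Y) ∧
      (∀ d ∈ l.head?, rX d.unpair.1 c.unpair.1 ∧ rY d.unpair.2 c.unpair.2) ∧
      l ∈ DDT X Y rX rY := by
  simp only [mem_iff, List.forall_mem_cons, List.isChain_cons]
  tauto

theorem subset_isChain :
    DDT X Y rX rY ⊆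
      {l | l.IsChain (flip (InvImage (fun a b => rY a b ∧ a ∈ Y ∧ b ∈ Y) (·.unpair.2)))} := by
  intro l hl
  obtain ⟨hmem, hchain⟩ := mem_iff.1 hl
  exact hchain.imp_of_mem_imp fun c d hc hd h => ⟨h.2, (hmem d hd).2, (hmem c hc).2⟩

theorem wellFoundedOn_KB (hY : Y.WellFoundedOn rY) :
    (DDT X Y rX rY).WellFoundedOn KB :=
  (KB.wellFoundedOn_isChain (InvImage.wf _ (Set.wellFoundedOn_iff.1 hY))).subset subset_isChain

end DDT

theorem Nat.pair_lt_pair_of_lt_of_le {x x' y y' : ℕ} (hx : x < x') (hy : y ≤ x) :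
    Nat.pair x y < Nat.pair x' y' :=
  calc Nat.pair x y < (max x y + 1) ^ 2 := Nat.pair_lt_max_add_one_sq x y
    _ = (x + 1) ^ 2 := by rw [max_eq_left hy]
    _ ≤ max x' y' ^ 2 := Nat.pow_le_pow_left (le_max_of_le_left hx) 2
    _ ≤ Nat.pair x' y' := (Nat.le_add_right _ _).trans (Nat.max_sq_add_min_le_pair x' y')

section RatEmbed

variable {q : ℕ → ℚ}

theorem infinite_setOf_rat_lt (hq : Function.Surjective q) (b : WithTop ℚ) :
    {a | (q a : WithTop ℚ) < b}.Infinite := by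
  induction b with
  | top => simpa using Set.infinite_univ
  | coe r =>
    simp only [WithTop.coe_lt_coe]
    exact (Set.Iio_infinite r).preimage (hq.range_eq ▸ Set.subset_univ _)

noncomputable def ratChild (q : ℕ → ℚ) (b : WithTop ℚ) (c : ℕ) : ℕ :=
  Nat.pair (Nat.nth (fun a => (q a : WithTop ℚ) < b) c) c.unpair.2

theorem unpair_ratChild_snd (b : WithTop ℚ) (c : ℕ) : (ratChild q b c).unpair.2 = c.unpair.2 := by
  simp [ratChild]

theorem ratChild_fst_lt (hq : Function.Surjective q) (b : WithTop ℚ) (c : ℕ) :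
    (q (ratChild q b c).unpair.1 : WithTop ℚ) < b := by
  simpa [ratChild] using Nat.nth_mem_of_infinite (infinite_setOf_rat_lt hq b) c

theorem ratChild_strictMono (hq : Function.Surjective q) (b : WithTop ℚ) :
    StrictMono (ratChild q b) := by
  have hnth := Nat.nth_strictMono (infinite_setOf_rat_lt hq b)
  intro c c' hc
  exact Nat.pair_lt_pair_of_lt_of_le (hnth hc) ((Nat.unpair_right_le c).trans (hnth.id_le c))

/-- `b` is the rational value of the parent's first coordinate, `⊤` at the root. -/
noncomputable def ratEmbed (q : ℕ → ℚ) : WithTop ℚ → List ℕ → List ℕ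
  | _, [] => []
  | b, c :: l => ratChild q b c :: ratEmbed q (q (ratChild q b c).unpair.1) l

theorem head?_ratEmbed (b : WithTop ℚ) (l : List ℕ) :
    (ratEmbed q b l).head? = l.head?.map (ratChild q b) := by
  cases l <;> rfl

theorem KB_ratEmbed (hq : Function.Surjective q) {s t : List ℕ} (h : KB s t) (b : WithTop ℚ) :
    KB (ratEmbed q b s) (ratEmbed q b t) := by
  induction s generalizing t b with
  | nil => exact absurd h (KB.not_nil_left t)
  | cons c s ih =>
    rcases t with _ | ⟨d, t⟩
    · exact (KB.nil_right_iff _).2 (List.cons_ne_nil _ _)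
    rcases KB.cons_cons_iff.1 h with hcd | ⟨rfl, hst⟩
    · exact KB.cons_cons_iff.2 (Or.inl (ratChild_strictMono hq b hcd))
    · exact KB.cons_cons_iff.2 (Or.inr ⟨rfl, ih hst _⟩)

theorem ratEmbed_mem_DDT (hq : Function.Surjective q) {X Y : Set ℕ} {rX rY : ℕ → ℕ → Prop}
    {s : List ℕ} (hs : s ∈ DDT X Y rX rY) (b : WithTop ℚ) :
    ratEmbed q b s ∈ DDT Set.univ Y (fun m n => q m < q n) rY := by
  induction s generalizing b with
  | nil => exact DDT.mem_iff.2 ⟨by simp [ratEmbed], List.IsChain.nil⟩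
  | cons c s ih =>
    obtain ⟨hc, hhead, hs⟩ := DDT.cons_mem_iff.1 hs
    refine DDT.cons_mem_iff.2 ⟨⟨trivial, unpair_ratChild_snd b c ▸ hc.2⟩, ?_, ih hs _⟩
    simp only [head?_ratEmbed, Option.mem_map]
    rintro _ ⟨d, hd, rfl⟩
    exact ⟨WithTop.coe_lt_coe.1 (ratChild_fst_lt hq _ d),
      by simpa only [unpair_ratChild_snd] using (hhead d hd).2⟩

end RatEmbed

theorem star_le_rat_star_general (q : ℕ → ℚ) (hq : Function.Bijective q)
    (X Y : Set ℕ) (rX rY : ℕ → ℕ → Prop)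
    (hY : IsWellOrdOn Y rY) :
    IsWellOrdOn (DDT X Y rX rY) KB ∧
    IsWellOrdOn (DDT Set.univ Y (fun m n => q m < q n) rY) KB ∧
    Nonempty (Subrel KB (DDT X Y rX rY) ↪r
      Subrel KB (DDT Set.univ Y (fun m n => q m < q n) rY)) :=
  ⟨⟨KB.isLinOrdOn _, DDT.wellFoundedOn_KB (X := X) (rX := rX) hY.2⟩,
    ⟨KB.isLinOrdOn _, DDT.wellFoundedOn_KB (X := Set.univ) (rX := fun m n => q m < q n) hY.2⟩,
    -- the relations are written with `(· ∈ D)` so that the `Subrel` instances are found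
    ⟨RelEmbedding.ofMonotone (r := Subrel KB (· ∈ DDT X Y rX rY))
      (s := Subrel KB (· ∈ DDT Set.univ Y (fun m n => q m < q n) rY))
      (fun s => ⟨ratEmbed q ⊤ s.1, ratEmbed_mem_DDT hq.2 s.2 ⊤⟩) fun _ _ h => KB_ratEmbed hq.2 h ⊤⟩⟩

/-- If `X` is a linear order and `Y` a well order (on subsets of ℕ),
then `X*Y` and `ℚ_q*Y` are well orders, and `|X*Y| ≤ |ℚ_q*Y|`: there is an order
embedding of the former Kleene–Brouwer order into the latter.  Here `ℚ_q` is the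
linear order on ℕ induced by a fixed bijection `q : ℕ → ℚ`. -/
theorem star_le_rat_star (q : ℕ → ℚ) (hq : Function.Bijective q)
    (X Y : Set ℕ) (rX rY : ℕ → ℕ → Prop)
    (hX : IsLinOrdOn X rX) (hY : IsWellOrdOn Y rY) :
    IsWellOrdOn (DDT X Y rX rY) KB ∧
    IsWellOrdOn (DDT Set.univ Y (fun m n => q m < q n) rY) KB ∧
    Nonempty (Subrel KB (DDT X Y rX rY) ↪r
      Subrel KB (DDT Set.univ Y (fun m n => q m < q n) rY)) :=
  star_le_rat_star_general q hq X Y rX rY hY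
end

section
/- For all well orders X and Y on subsets of ℕ∖{0}, there exists exactly one function f : ℕ → ℕ such that either f is a strong comparison map from X to Y, or f is a strong comparison map from Y+1 to X. -/
/-- `f : ℕ → ℕ` is a strong comparison map from `(X, rX)` to `(Y, rY)`
(`f : X ≤_s Y`): `f` vanishes off `X`, maps `X` into `Y` as an order embedding
(w.r.t. the reflexive closures of the strict orders), and its image is an initial
segment of `Y`. -/
def StrongCompMap (X : Set ℕ) (rX : ℕ → ℕ → Prop) (Y : Set ℕ) (rY : ℕ → ℕ → Prop)
    (f : ℕ → ℕ) : Prop :=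
  (∀ n, n ∉ X → f n = 0) ∧
  (∀ n ∈ X, f n ∈ Y) ∧
  (∀ n ∈ X, ∀ m ∈ X, ((rX n m ∨ n = m) ↔ (rY (f n) (f m) ∨ f n = f m))) ∧
  (∀ n ∈ X, ∀ k ∈ Y, (rY k (f n) ∨ k = f n) → ∃ m ∈ X, f m = k)

/-- The order `Y+1`: `0` (not a member of `Y`) is added to `Y` as a new greatest
element. -/
def succRel (Y : Set ℕ) (rY : ℕ → ℕ → Prop) : ℕ → ℕ → Prop :=
  fun a b => (a ∈ Y ∧ b ∈ Y ∧ rY a b) ∨ (a ∈ Y ∧ b = 0)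

/-! A strong comparison map `A ≤_s B` is the same thing as an initial segment embedding
`A ≼i B`, extended by `0` outside `A`. Initial segments into a well order are unique, and one
exists iff `type A ≤ type B`. Since `Y+1 ≃r Y ⊕ₗ 1` has order type `type Y + 1`, exactly one of
`type X ≤ type Y` and `type Y + 1 ≤ type X` holds. -/

open Ordinal InitialSeg

section StrongCompMap

variable {A B : Set ℕ} {rA rB : ℕ → ℕ → Prop} {f g : ℕ → ℕ}

theorem IsWellOrdOn.isWellOrder (h : IsWellOrdOn A rA) :
    IsWellOrder (Subtype A) (Subrel rA A) where
  trichotomous a b hab hba :=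
    Subtype.ext (((h.1.2.2 a.1 a.2 b.1 b.2).resolve_left hab).resolve_right hba)
  wf := h.2

theorem strongCompMap_extend_initialSeg (e : Subrel rA A ≼i Subrel rB B) :
    StrongCompMap A rA B rB (Function.extend Subtype.val (fun a => (e a).1) 0) := by
  have extend_val (a : Subtype A) :
      Function.extend Subtype.val (fun a => (e a).1) 0 a.1 = (e a).1 :=
    Subtype.val_injective.extend_apply _ _ a
  refine ⟨fun n hn => Function.extend_apply' _ _ _ fun ⟨a, ha⟩ => hn (ha ▸ a.2),
    fun n hn => extend_val ⟨n, hn⟩ ▸ (e ⟨n, hn⟩).2, fun n hn m hm => ?_, fun n hn k hk hk' => ?_⟩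
  · rw [extend_val ⟨n, hn⟩, extend_val ⟨m, hm⟩]
    exact or_congr (e.map_rel_iff (a := (⟨n, hn⟩ : Subtype A)) (b := ⟨m, hm⟩)).symm
      (Subtype.val_injective.eq_iff.trans (e.inj (a := (⟨n, hn⟩ : Subtype A)) (b := ⟨m, hm⟩))
        |>.trans Subtype.mk_eq_mk).symm
  · rw [extend_val ⟨n, hn⟩] at hk'
    obtain ⟨a, ha⟩ : ∃ a, e a = ⟨k, hk⟩ := by
      rcases hk' with hlt | rfl
      · exact e.mem_range_of_rel (b := ⟨k, hk⟩) hlt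
      · exact ⟨_, rfl⟩
    exact ⟨a.1, a.2, by rw [extend_val, ha]⟩

theorem StrongCompMap.exists_initialSeg [IsStrictOrder (Subtype A) (Subrel rA A)]
    [Std.Irrefl (Subrel rB B)] (hf : StrongCompMap A rA B rB f) :
    ∃ e : Subrel rA A ≼i Subrel rB B, ∀ a : Subtype A, (e a).1 = f a.1 := by
  obtain ⟨-, hmaps, hle_iff, hinit⟩ := hf
  have hinj (a b : Subtype A) (hab : f a.1 = f b.1) : a = b := by
    rcases (hle_iff a.1 a.2 b.1 b.2).2 (.inr hab) with h₁ | h₁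
    · rcases (hle_iff b.1 b.2 a.1 a.2).2 (.inr hab.symm) with h₂ | h₂
      · exact absurd (_root_.trans (r := Subrel rA A) h₁ h₂) (irrefl a)
      · exact Subtype.ext h₂.symm
    · exact Subtype.ext h₁
  have hlt_iff (a b : Subtype A) : rB (f a.1) (f b.1) ↔ rA a.1 b.1 := by
    constructor
    · intro h
      refine ((hle_iff a.1 a.2 b.1 b.2).2 (.inl h)).resolve_right fun hab => ?_
      rw [hab] at h
      exact irrefl (r := Subrel rB B) ⟨f b.1, hmaps b.1 b.2⟩ h
    · intro h
      refine ((hle_iff a.1 a.2 b.1 b.2).1 (.inl h)).resolve_right fun hab => ?_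
      obtain rfl := hinj a b hab
      exact irrefl (r := Subrel rA A) a h
  refine ⟨⟨⟨⟨fun a => ⟨f a.1, hmaps a.1 a.2⟩, fun a b hab => hinj a b (congrArg Subtype.val hab)⟩,
    hlt_iff _ _⟩, fun a b hb => ?_⟩, fun a => rfl⟩
  obtain ⟨m, hm, hmb⟩ := hinit a.1 a.2 b.1 b.2 (.inl hb)
  exact ⟨⟨m, hm⟩, Subtype.ext hmb⟩

theorem StrongCompMap.unique [IsStrictOrder (Subtype A) (Subrel rA A)]
    [IsWellOrder (Subtype B) (Subrel rB B)]
    (hf : StrongCompMap A rA B rB f) (hg : StrongCompMap A rA B rB g) : f = g := by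
  obtain ⟨e, he⟩ := hf.exists_initialSeg
  obtain ⟨e', he'⟩ := hg.exists_initialSeg
  funext n
  by_cases hn : n ∈ A
  · rw [← he ⟨n, hn⟩, ← he' ⟨n, hn⟩, Subsingleton.elim e e']
  · rw [hf.1 n hn, hg.1 n hn]

theorem exists_strongCompMap_iff_type_le [IsWellOrder (Subtype A) (Subrel rA A)]
    [IsWellOrder (Subtype B) (Subrel rB B)] :
    (∃ f, StrongCompMap A rA B rB f) ↔ type (Subrel rA A) ≤ type (Subrel rB B) := by
  refine ⟨fun ⟨f, hf⟩ => ?_, fun h => ?_⟩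
  · obtain ⟨e, -⟩ := hf.exists_initialSeg
    exact type_le_iff.2 ⟨e⟩
  · obtain ⟨e⟩ := type_le_iff.1 h
    exact ⟨_, strongCompMap_extend_initialSeg e⟩

end StrongCompMap

section SuccRel

variable {Y : Set ℕ} {rY : ℕ → ℕ → Prop}

open Classical in
noncomputable def sumLexSuccRelIso (hY0 : 0 ∉ Y) :
    Sum.Lex (Subrel rY Y) (@emptyRelation PUnit) ≃r
      Subrel (succRel Y rY) (insert 0 Y : Set ℕ) where
  toEquiv := (Equiv.Set.insert hY0).symm
  map_rel_iff' {a b} := by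
    rcases a with a | ⟨⟩ <;> rcases b with b | ⟨⟩
    · change succRel Y rY a.1 b.1 ↔ _
      simp [succRel, Subrel, ne_of_mem_of_not_mem b.2 hY0]
    · change succRel Y rY a.1 0 ↔ _
      simp [succRel]
    · change succRel Y rY 0 b.1 ↔ _
      simp [succRel, hY0]
    · change succRel Y rY 0 0 ↔ _
      simp [succRel, hY0]

theorem isWellOrder_succRel (hY0 : 0 ∉ Y) [IsWellOrder (Subtype Y) (Subrel rY Y)] :
    IsWellOrder (Subtype (insert 0 Y : Set ℕ)) (Subrel (succRel Y rY) (insert 0 Y : Set ℕ)) :=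
  (sumLexSuccRelIso hY0).symm.toRelEmbedding.isWellOrder

theorem type_succRel (hY0 : 0 ∉ Y)
    [IsWellOrder (Subtype Y) (Subrel rY Y)]
    [IsWellOrder (Subtype (insert 0 Y : Set ℕ)) (Subrel (succRel Y rY) (insert 0 Y : Set ℕ))] :
    type (Subrel (succRel Y rY) (insert 0 Y : Set ℕ)) = type (Subrel rY Y) + 1 := by
  rw [← type_eq.2 ⟨sumLexSuccRelIso hY0⟩, type_sum_lex, type_pUnit]

end SuccRel

theorem cwo_existsUnique_general (X Y : Set ℕ) (rX rY : ℕ → ℕ → Prop)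
    (hY0 : 0 ∉ Y)
    (hX : IsWellOrdOn X rX) (hY : IsWellOrdOn Y rY) :
    ∃! f : ℕ → ℕ,
      StrongCompMap X rX Y rY f ∨ StrongCompMap (insert 0 Y) (succRel Y rY) X rX f := by
  have := hX.isWellOrder
  have := hY.isWellOrder
  have := isWellOrder_succRel (rY := rY) hY0
  have htype_succ := type_succRel (rY := rY) hY0
  obtain ⟨f, hf⟩ : ∃ f, StrongCompMap X rX Y rY f ∨
      StrongCompMap (insert 0 Y) (succRel Y rY) X rX f := by
    rcases le_or_gt (type (Subrel rX X)) (type (Subrel rY Y)) with h | h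
    · exact (exists_strongCompMap_iff_type_le.2 h).imp fun _ => .inl
    · rw [← Order.add_one_le_iff, ← htype_succ, ← exists_strongCompMap_iff_type_le] at h
      exact h.imp fun _ => .inr
  have not_both {f g : ℕ → ℕ} (hf : StrongCompMap X rX Y rY f)
      (hg : StrongCompMap (insert 0 Y) (succRel Y rY) X rX g) : False := by
    have hXY := exists_strongCompMap_iff_type_le.1 ⟨f, hf⟩
    have hYX := exists_strongCompMap_iff_type_le.1 ⟨g, hg⟩
    rw [htype_succ, Order.add_one_le_iff] at hYX
    exact hYX.not_ge hXY
  refine ⟨f, hf, fun g hg => ?_⟩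
  rcases hf with hf | hf <;> rcases hg with hg | hg
  · exact hg.unique hf
  · exact (not_both hf hg).elim
  · exact (not_both hg hf).elim
  · exact hg.unique hf

/-- comparability of well orderings, CWO.  For all well orders
`X`, `Y` on subsets of `ℕ∖{0}` there is exactly one `f : ℕ → ℕ` such that
`f : X ≤_s Y` or `f : Y+1 ≤_s X`. -/
theorem cwo_existsUnique (X Y : Set ℕ) (rX rY : ℕ → ℕ → Prop)
    (hX0 : 0 ∉ X) (hY0 : 0 ∉ Y)
    (hX : IsWellOrdOn X rX) (hY : IsWellOrdOn Y rY) :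
    ∃! f : ℕ → ℕ,
      StrongCompMap X rX Y rY f ∨ StrongCompMap (insert 0 Y) (succRel Y rY) X rX f :=
  cwo_existsUnique_general X Y rX rY hY0 hX hY
end

section
/- Perfect tree theorem: for every tree T on ℕ, either the set [T] of branches of T is countable, or T has a perfect subtree, i.e., a nonempty subset T' ⊆ T which is itself a tree and in which every element has two incomparable extensions belonging to T'. -/
/-- A tree is perfect if every element has two incomparable extensions in the tree. -/
def PerfectTree (T : Set (List ℕ)) : Prop :=
  ∀ s ∈ T, ∃ u ∈ T, ∃ w ∈ T, s <+: u ∧ s <+: w ∧ ¬u <+: w ∧ ¬w <+: u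

def initSeg {α : Type*} (x : ℕ → α) (n : ℕ) : List α := (List.range n).map x

section initSeg

variable {α : Type*} (x : ℕ → α)

@[simp]
lemma length_initSeg (n : ℕ) : (initSeg x n).length = n := by
  simp [initSeg]

lemma take_initSeg {m n : ℕ} (h : m ≤ n) : (initSeg x n).take m = initSeg x m := by
  simp [initSeg, ← List.map_take, List.take_range, Nat.min_eq_left h]

lemma initSeg_prefix_initSeg {m n : ℕ} (h : m ≤ n) : initSeg x m <+: initSeg x n := by
  rw [← take_initSeg x h]
  exact List.take_prefix _ _

lemma initSeg_succ (n : ℕ) : initSeg x (n + 1) = initSeg x n ++ [x n] := by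
  simp [initSeg, List.range_succ]

lemma eq_of_forall_initSeg_eq {y : ℕ → α} (h : ∀ n, initSeg x n = initSeg y n) : x = y := by
  funext n
  simpa [initSeg_succ, h n] using h (n + 1)

end initSeg

def branchesThrough (T : Set (List ℕ)) (s : List ℕ) : Set (ℕ → ℕ) :=
  {x | IsBranch T x ∧ initSeg x s.length = s}

section branchesThrough

variable {T : Set (List ℕ)}

lemma branchesThrough_nil (T : Set (List ℕ)) : branchesThrough T [] = Branches T := by
  ext x
  simp [branchesThrough, Branches, initSeg]

lemma mem_branchesThrough_initSeg {x : ℕ → ℕ} (hx : IsBranch T x) (n : ℕ) :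
    x ∈ branchesThrough T (initSeg x n) :=
  ⟨hx, by rw [length_initSeg]⟩

lemma mem_of_mem_branchesThrough {s : List ℕ} {x : ℕ → ℕ} (hx : x ∈ branchesThrough T s) :
    s ∈ T :=
  hx.2 ▸ hx.1 s.length

lemma prefix_initSeg_of_mem_branchesThrough {s : List ℕ} {x : ℕ → ℕ}
    (hx : x ∈ branchesThrough T s) {n : ℕ} (h : s.length ≤ n) : s <+: initSeg x n :=
  hx.2 ▸ initSeg_prefix_initSeg x h

lemma branchesThrough_anti {s t : List ℕ} (hts : t <+: s) :
    branchesThrough T s ⊆ branchesThrough T t := by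
  intro x ⟨hx, hxs⟩
  refine ⟨hx, ?_⟩
  calc initSeg x t.length = (initSeg x s.length).take t.length :=
        (take_initSeg x hts.length_le).symm
    _ = t := by rw [hxs, ← List.prefix_iff_eq_take.mp hts]

end branchesThrough

def condensationTree (T : Set (List ℕ)) : Set (List ℕ) :=
  {s | ¬(branchesThrough T s).Countable}

section condensationTree

variable {T : Set (List ℕ)}

lemma condensationTree_subset (T : Set (List ℕ)) : condensationTree T ⊆ T := by
  intro s hs
  obtain ⟨x, hx⟩ : (branchesThrough T s).Nonempty :=
    Set.nonempty_iff_ne_empty.mpr fun h => hs (h ▸ Set.countable_empty)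
  exact mem_of_mem_branchesThrough hx

lemma isTree_condensationTree (T : Set (List ℕ)) : IsTree (condensationTree T) :=
  fun _ hs _ hts htc => hs (htc.mono (branchesThrough_anti hts))

lemma nil_mem_condensationTree (hT : ¬(Branches T).Countable) : [] ∈ condensationTree T := by
  rwa [condensationTree, Set.mem_ofPred_eq, branchesThrough_nil]

lemma subsingleton_branchesThrough_sep_of_chain {s : List ℕ}
    (hchain : ∀ u ∈ condensationTree T, ∀ w ∈ condensationTree T,
      s <+: u → s <+: w → u <+: w ∨ w <+: u) :
    {x ∈ branchesThrough T s | ∀ n, initSeg x n ∈ condensationTree T}.Subsingleton := by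
  rintro x ⟨hxs, hx⟩ y ⟨hys, hy⟩
  refine eq_of_forall_initSeg_eq x fun n => ?_
  set m := max n s.length
  have hsm : s.length ≤ m := le_max_right _ _
  have hm : initSeg x m = initSeg y m := by
    have hlen : (initSeg x m).length = (initSeg y m).length := by simp
    rcases hchain _ (hx m) _ (hy m) (prefix_initSeg_of_mem_branchesThrough hxs hsm)
        (prefix_initSeg_of_mem_branchesThrough hys hsm) with h | h
    · exact h.eq_of_length hlen
    · exact (h.eq_of_length hlen.symm).symm
  rw [← take_initSeg x (le_max_left n _), hm, take_initSeg y (le_max_left n _)]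

lemma countable_branchesThrough_of_chain {s : List ℕ}
    (hchain : ∀ u ∈ condensationTree T, ∀ w ∈ condensationTree T,
      s <+: u → s <+: w → u <+: w ∨ w <+: u) :
    (branchesThrough T s).Countable := by
  have cover : branchesThrough T s ⊆
      {x ∈ branchesThrough T s | ∀ n, initSeg x n ∈ condensationTree T} ∪
        ⋃ t ∈ (condensationTree T)ᶜ, branchesThrough T t := by
    intro x hx
    by_cases hall : ∀ n, initSeg x n ∈ condensationTree T
    · exact Or.inl ⟨hx, hall⟩
    · obtain ⟨n, hn⟩ := not_forall.mp hall
      exact Or.inr (Set.mem_biUnion hn (mem_branchesThrough_initSeg hx.1 n))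
  refine .mono cover ((subsingleton_branchesThrough_sep_of_chain hchain).countable.union ?_)
  exact (Set.to_countable _).biUnion fun _ ht => not_not.mp ht

lemma perfectTree_condensationTree (T : Set (List ℕ)) : PerfectTree (condensationTree T) := by
  intro s hs
  by_contra hcon
  refine hs (countable_branchesThrough_of_chain fun u hu w hw hsu hsw => ?_)
  by_contra hcomparable
  rw [not_or] at hcomparable
  exact hcon ⟨u, hu, w, hw, hsu, hsw, hcomparable⟩

end condensationTree

theorem perfect_tree_theorem_general (T : Set (List ℕ)) :
    (Branches T).Countable ∨
      ∃ T' : Set (List ℕ), T' ⊆ T ∧ T'.Nonempty ∧ IsTree T' ∧ PerfectTree T' := by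
  refine or_iff_not_imp_left.mpr fun hT => ?_
  exact ⟨condensationTree T, condensationTree_subset T, ⟨[], nil_mem_condensationTree hT⟩,
    isTree_condensationTree T, perfectTree_condensationTree T⟩

/-- perfect tree theorem.  For every tree `T` on ℕ, either `[T]`
is countable or `T` has a perfect subtree. -/
theorem perfect_tree_theorem (T : Set (List ℕ)) (hT : IsTree T) :
    (Branches T).Countable ∨
      ∃ T' : Set (List ℕ), T' ⊆ T ∧ T'.Nonempty ∧ IsTree T' ∧ PerfectTree T' :=
  perfect_tree_theorem_general T
end

section
/- Open determinacy (Gale–Stewart): for every open subset W of Baire space ℕ^ℕ (with the product topology, ℕ discrete), the two-player game with payoff W is determined: either Player 1 has a winning strategy or Player 2 has a winning strategy. -/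
/-!
If Player 1 has no winning strategy, Player 2 wins by always moving to a position from which
Player 1 still cannot force a win: at Player 1's turns every move preserves this, and at
Player 2's turns some move must, since otherwise Player 1 could win by answering each move
with a winning strategy for the resulting position. The resulting play cannot lie in `W`:
as `W` is open, membership would be decided by a finite prefix, and from that prefix Player 1
would trivially win.
-/

/-- The history (list of the first `n` moves) of the play in which Player 1 follows
strategy `σ` (moving at even-length, i.e. even, stages) and Player 2 follows
strategy `τ` (moving at odd stages). -/
def hist (σ τ : List ℕ → ℕ) : ℕ → List ℕ
  | 0 => []
  | n + 1 => hist σ τ n ++ [if n % 2 = 0 then σ (hist σ τ n) else τ (hist σ τ n)]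

/-- The play determined by strategies `σ` (for Player 1) and `τ` (for Player 2):
`play σ τ (2k) = σ ⟨p 0, …, p (2k-1)⟩` and `play σ τ (2k+1) = τ ⟨p 0, …, p (2k)⟩`. -/
def play (σ τ : List ℕ → ℕ) (n : ℕ) : ℕ :=
  if n % 2 = 0 then σ (hist σ τ n) else τ (hist σ τ n)

namespace GaleStewart

variable {σ σ' τ τ' : List ℕ → ℕ} {W : Set (ℕ → ℕ)} {s : List ℕ}

theorem hist_succ (σ τ : List ℕ → ℕ) (n : ℕ) : hist σ τ (n + 1) = hist σ τ n ++ [play σ τ n] :=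
  rfl

theorem play_of_even {n : ℕ} (hn : Even n) : play σ τ n = σ (hist σ τ n) := by
  simp [play, Nat.even_iff.mp hn]

theorem play_of_odd {n : ℕ} (hn : Odd n) : play σ τ n = τ (hist σ τ n) := by
  simp [play, Nat.odd_iff.mp hn]

@[simp]
theorem length_hist (σ τ : List ℕ → ℕ) (n : ℕ) : (hist σ τ n).length = n := by
  induction n with
  | zero => rfl
  | succ n ih => simp [hist_succ, ih]

theorem take_hist {k m : ℕ} (h : k ≤ m) : (hist σ τ m).take k = hist σ τ k := by
  induction m, h using Nat.le_induction with
  | base => simp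
  | succ m hkm ih => rw [hist_succ, List.take_append_of_le_length (by simpa), ih]

theorem getElem?_hist {i m : ℕ} (h : i < m) : (hist σ τ m)[i]? = some (play σ τ i) := by
  rw [← List.getElem?_take_of_lt (Nat.lt_succ_self i), take_hist h, hist_succ]
  simp

theorem getElem_hist {i m : ℕ} (h : i < (hist σ τ m).length) :
    (hist σ τ m)[i] = play σ τ i := by
  have := getElem?_hist (σ := σ) (τ := τ) (by simpa using h)
  rw [List.getElem?_eq_getElem h] at this
  exact Option.some.inj this

theorem play_eq_of_hist_eq {m i : ℕ} (h : hist σ τ m = hist σ' τ' m) (hi : i < m) :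
    play σ τ i = play σ' τ' i := by
  simpa [getElem?_hist hi] using congrArg (·[i]?) h

theorem hist_congr (h : ∀ k, Even k → σ (hist σ τ k) = σ' (hist σ τ k)) :
    hist σ τ = hist σ' τ := by
  funext n
  induction n with
  | zero => rfl
  | succ n ih =>
    rcases Nat.even_or_odd n with hn | hn
    · rw [hist_succ, hist_succ, play_of_even hn, play_of_even hn, h n hn, ih]
    · rw [hist_succ, hist_succ, play_of_odd hn, play_of_odd hn, ih]

theorem play_congr (h : ∀ k, Even k → σ (hist σ τ k) = σ' (hist σ τ k)) :
    play σ τ = play σ' τ :=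
  funext fun i => play_eq_of_hist_eq (congrFun (hist_congr h) (i + 1)) (Nat.lt_succ_self i)

def Follows (σ : List ℕ → ℕ) (s : List ℕ) : Prop :=
  ∀ k (hk : k < s.length), Even k → σ (s.take k) = s[k]

theorem Follows.of_append {t : List ℕ} (h : Follows σ (s ++ t)) : Follows σ s := fun k hk hev => by
  have := h k (by simp; omega) hev
  rwa [List.take_append_of_le_length hk.le, List.getElem_append_left hk] at this

theorem follows_hist (σ τ : List ℕ → ℕ) (n : ℕ) : Follows σ (hist σ τ n) := fun k hk hev => by
  simp only [length_hist] at hk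
  rw [take_hist hk.le, getElem_hist, play_of_even hev]

def WinsFrom (W : Set (ℕ → ℕ)) (s : List ℕ) : Prop :=
  ∃ σ, Follows σ s ∧ ∀ τ, hist σ τ s.length = s → play σ τ ∈ W

theorem WinsFrom.of_append_of_even {n : ℕ} (hs : Even s.length) (h : WinsFrom W (s ++ [n])) :
    WinsFrom W s := by
  obtain ⟨σ, hσ, hwin⟩ := h
  refine ⟨σ, hσ.of_append, fun τ hτ => hwin τ ?_⟩
  have hmove : σ s = n := by simpa using hσ s.length (by simp) hs
  rw [List.length_append, List.length_singleton, hist_succ, play_of_even hs, hτ, hmove]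

theorem WinsFrom.of_forall_append_of_odd (hs : Odd s.length)
    (h : ∀ n, WinsFrom W (s ++ [n])) : WinsFrom W s := by
  choose σf hσf hwin using h
  -- Answer Player 2's move `n` at `s` by the winning strategy for `s ++ [n]`.
  let σ : List ℕ → ℕ := fun t => σf (t.getD s.length 0) t
  have hshort : ∀ t : List ℕ, t.length ≤ s.length → σ t = σf 0 t := fun t ht => by
    simp only [σ, List.getD_eq_default _ _ ht]
  have hprefix : ∀ n, Follows (σf n) s := fun n => (hσf n).of_append
  refine ⟨σ, fun k hk hev => (hshort _ (by simp [hk.le])).trans (hprefix 0 k hk hev),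
    fun τ hτ => ?_⟩
  set n := τ s
  have hagree : ∀ k, Even k → σ (hist σ τ k) = σf n (hist σ τ k) := by
    intro k hev
    rcases lt_or_gt_of_ne (show k ≠ s.length by rintro rfl; exact Nat.not_even_iff_odd.2 hs hev)
      with hlt | hgt
    · rw [← take_hist hlt.le, hτ, hshort _ (by simp [hlt.le]), hprefix 0 k hlt hev,
        hprefix n k hlt hev]
    · change σf ((hist σ τ k).getD s.length 0) _ = _
      rw [List.getD_eq_getElem?_getD, getElem?_hist hgt, play_of_odd hs, hτ, Option.getD_some]
  rw [play_congr hagree]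
  apply hwin n
  rw [← hist_congr hagree, List.length_append, List.length_singleton, hist_succ,
    play_of_odd hs, hτ]

open Classical in
noncomputable def defensiveStrategy (W : Set (ℕ → ℕ)) (t : List ℕ) : ℕ :=
  if h : ∃ n, ¬WinsFrom W (t ++ [n]) then h.choose else 0

theorem not_winsFrom_hist_defensiveStrategy (h : ¬WinsFrom W []) (σ : List ℕ → ℕ) (k : ℕ) :
    ¬WinsFrom W (hist σ (defensiveStrategy W) k) := by
  induction k with
  | zero => exact h
  | succ k ih =>
    rcases Nat.even_or_odd k with hk | hk
    · rw [hist_succ, play_of_even hk]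
      exact fun hwin => ih (hwin.of_append_of_even (by simpa))
    · have hex : ∃ n, ¬WinsFrom W (hist σ (defensiveStrategy W) k ++ [n]) := by
        by_contra! hall
        exact ih (WinsFrom.of_forall_append_of_odd (by simpa) hall)
      rw [hist_succ, play_of_odd hk, defensiveStrategy, dif_pos hex]
      exact hex.choose_spec

theorem exists_winsFrom_hist_of_play_mem (hW : IsOpen W) (hplay : play σ τ ∈ W) :
    ∃ N, WinsFrom W (hist σ τ N) := by
  obtain ⟨_, ⟨x, N, rfl⟩, hx, hsub⟩ :=
    (PiNat.isTopologicalBasis_cylinders fun _ => ℕ).exists_subset_of_mem_open hplay hW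
  rw [← PiNat.mem_cylinder_iff_eq.1 hx] at hsub
  refine ⟨N, σ, follows_hist σ τ N, fun τ' hτ' => hsub (PiNat.mem_cylinder_iff.2 fun i hi => ?_)⟩
  rw [length_hist] at hτ'
  exact play_eq_of_hist_eq hτ' hi

end GaleStewart

open GaleStewart in
/-- open determinacy, Gale–Stewart.  Every Gale–Stewart game on ℕ
with open payoff set `W ⊆ ℕ^ℕ` is determined: either Player 1 has a winning strategy,
or Player 2 has a winning strategy. -/
theorem open_determinacy (W : Set (ℕ → ℕ)) (hW : IsOpen W) :
    (∃ σ : List ℕ → ℕ, ∀ τ : List ℕ → ℕ, play σ τ ∈ W) ∨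
    (∃ τ : List ℕ → ℕ, ∀ σ : List ℕ → ℕ, play σ τ ∉ W) := by
  by_cases h : WinsFrom W []
  · obtain ⟨σ, -, hwin⟩ := h
    exact Or.inl ⟨σ, fun τ => hwin τ rfl⟩
  · refine Or.inr ⟨defensiveStrategy W, fun σ hplay => ?_⟩
    obtain ⟨N, hN⟩ := exists_winsFrom_hist_of_play_mem hW hplay
    exact not_winsFrom_hist_defensiveStrategy h σ N hN
end

section
/- Let (X_n)_{n∈ℕ} and (Y_n)_{n∈ℕ} be sequences of nonempty linear orders on subsets of ℕ such that for every n, at least one of X_n, Y_n is well-founded. Let U = Σ_{n∈ℕ} (ℚ_q*Y_n)*X_n and, for each n, Z_n = (U + X_n)*Y_n. Then for every n: Z_n is a well order; if X_n is not well-founded then |Z_n| < |U|; and if Y_n is not well-founded then |U| < |Z_n|. -/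
/-- A (candidate) linear order on a subset of ℕ: a domain together with a
strict order relation. -/
abbrev NatOrd := Set ℕ × (ℕ → ℕ → Prop)

/-- `A` is a linear order on a subset of ℕ. -/
def IsLinN (A : NatOrd) : Prop := IsLinOrdOn A.1 A.2

/-- `A` is well-founded (on its domain). -/
def WFN (A : NatOrd) : Prop := WellFounded (Subrel A.2 A.1)

/-- `A` is a well order on a subset of ℕ. -/
def IsWON (A : NatOrd) : Prop := IsLinN A ∧ WFN A

/-- A fixed injective coding of finite sequences of naturals into ℕ. -/
def listCode : List ℕ → ℕ := Encodable.encode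

/-- `A*B`, regarded as a linear order on a subset of ℕ: the Kleene–Brouwer ordering
of the double descent tree `T(A,B)`, transported to ℕ along the injective coding
`listCode`. -/
def ddStar (A B : NatOrd) : NatOrd :=
  (listCode '' DDT A.1 B.1 A.2 B.2,
   fun a b => ∃ s ∈ DDT A.1 B.1 A.2 B.2, ∃ t ∈ DDT A.1 B.1 A.2 B.2,
     listCode s = a ∧ listCode t = b ∧ KB s t)

/-- `Σ_{n∈ℕ} L n`: the sum of the sequence of orders `L`, with domain coded into ℕ
via `Nat.pair n a` for `a` in the domain of `L n`, ordered lexicographically. -/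
def sigmaOrd (L : ℕ → NatOrd) : NatOrd :=
  ({x | x.unpair.2 ∈ (L x.unpair.1).1},
   fun x y => x.unpair.1 < y.unpair.1 ∨
     (x.unpair.1 = y.unpair.1 ∧ (L x.unpair.1).2 x.unpair.2 y.unpair.2))

/-- `A + B`: the sum of two orders, every element of `A` preceding every element
of `B`, with domain coded into ℕ. -/
def addOrd (A B : NatOrd) : NatOrd :=
  ({x | (x.unpair.1 = 0 ∧ x.unpair.2 ∈ A.1) ∨ (x.unpair.1 = 1 ∧ x.unpair.2 ∈ B.1)},
   fun x y => x.unpair.1 < y.unpair.1 ∨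
     (x.unpair.1 = 0 ∧ y.unpair.1 = 0 ∧ A.2 x.unpair.2 y.unpair.2) ∨
     (x.unpair.1 = 1 ∧ y.unpair.1 = 1 ∧ B.2 x.unpair.2 y.unpair.2))

/-- The linear order `ℚ_q` on ℕ induced by a bijection `q : ℕ → ℚ`. -/
def ratOrd (q : ℕ → ℚ) : NatOrd := (Set.univ, fun m n => q m < q n)

/-- The well order `U = Σ_{n∈ℕ} (ℚ_q*Y_n)*X_n`. -/
def Uord (q : ℕ → ℚ) (X Y : ℕ → NatOrd) : NatOrd :=
  sigmaOrd fun n => ddStar (ddStar (ratOrd q) (Y n)) (X n)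

/-- The order `Z_n = (U + X_n)*Y_n`. -/
def Zord (q : ℕ → ℚ) (X Y : ℕ → NatOrd) (n : ℕ) : NatOrd :=
  ddStar (addOrd (Uord q X Y) (X n)) (Y n)

/-!
If `B` is a well order of type `β`, sending a node `c₀ ⋯ c_k` of the double descent tree `T(A, B)`
to the Cantor normal form `ω ^ β * c₀ + ω ^ |c₀| * c₁ + ⋯ + ω ^ (|c_k| + 1)`, where `|c|` is the
rank in `B` of the `B`-entry of the pair coded by `c`, is strictly monotone for the
Kleene–Brouwer order. Hence `A * B` is a well order of type at most `ω ^ (β + 1) + 1` as soon as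
one factor is well-founded. Conversely, if `A` is a nonempty well order of type `α` and `B` has an
infinite descending sequence, a node whose last `A`-entry has rank `γ` has children with codes
tending to infinity carrying every smaller rank, and induction on `γ` shows that the nodes
extending it have order type at least `ω ^ γ`; so `ω ^ α < |A * B|`.

Since `ℚ_q` has descending sequences, `|Y_n| < |ℚ_q * Y_n|`. When `X_n` is ill-founded, `Y_n` is a
well order and `|Z_n| ≤ ω ^ (|Y_n| + 1) + 1 ≤ ω ^ |ℚ_q * Y_n| + 1 ≤ |(ℚ_q * Y_n) * X_n| < |U|`.
When `Y_n` is ill-founded, `X_n` is a well order and `|U| < |U + X_n| ≤ ω ^ |U + X_n| < |Z_n|`.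
-/

open Ordinal Order

section KleeneBrouwer

theorem not_kb_nil (t : List ℕ) : ¬KB [] t := by
  rintro (⟨h, hne⟩ | ⟨i, hi, _⟩)
  · exact hne (List.prefix_nil.mp h)
  · simp at hi

theorem kb_nil_of_ne_nil {s : List ℕ} (h : s ≠ []) : KB s [] :=
  Or.inl ⟨List.nil_prefix, fun e => h e.symm⟩

theorem kb_cons_cons_iff {a b : ℕ} {s t : List ℕ} :
    KB (a :: s) (b :: t) ↔ a < b ∨ (a = b ∧ KB s t) := by
  constructor
  · rintro (⟨h, hne⟩ | ⟨_ | i, hi₁, hi₂, hj, hlt⟩)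
    · rw [List.cons_prefix_cons] at h
      exact Or.inr ⟨h.1.symm, Or.inl ⟨h.2, fun e => hne (by rw [h.1, e])⟩⟩
    · simpa using Or.inl hlt
    · refine Or.inr ⟨by simpa using hj 0 i.succ_pos, Or.inr ⟨i, ?_, ?_, fun j hj' => ?_, ?_⟩⟩
      · simpa using hi₁
      · simpa using hi₂
      · simpa using hj (j + 1) (by omega)
      · simpa using hlt
  · rintro (h | ⟨rfl, ⟨h, hne⟩ | ⟨i, hi₁, hi₂, hj, hlt⟩⟩)
    · exact Or.inr ⟨0, by simp, by simp, by simp, by simpa using h⟩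
    · exact Or.inl ⟨List.cons_prefix_cons.mpr ⟨rfl, h⟩, by simpa using hne⟩
    · refine Or.inr ⟨i + 1, by simpa using hi₁, by simpa using hi₂, fun j hj' => ?_,
        by simpa using hlt⟩
      rcases j with _ | j
      · simp
      · simpa using hj j (by omega)

theorem kb_irrefl (s : List ℕ) : ¬KB s s := by
  induction s with
  | nil => exact not_kb_nil []
  | cons a s ih => simpa [kb_cons_cons_iff] using ih

theorem kb_trans {s t u : List ℕ} (hst : KB s t) (htu : KB t u) : KB s u := by
  induction s generalizing t u with
  | nil => exact absurd hst (not_kb_nil t)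
  | cons a s ih =>
    rcases t with _ | ⟨b, t⟩
    · exact absurd htu (not_kb_nil u)
    rcases u with _ | ⟨c, u⟩
    · exact kb_nil_of_ne_nil (List.cons_ne_nil a s)
    rw [kb_cons_cons_iff] at hst htu ⊢
    rcases hst with hst | ⟨rfl, hst⟩ <;> rcases htu with htu | ⟨rfl, htu⟩
    · exact Or.inl (hst.trans htu)
    · exact Or.inl hst
    · exact Or.inl htu
    · exact Or.inr ⟨rfl, ih hst htu⟩

theorem kb_trichotomous (s t : List ℕ) : KB s t ∨ s = t ∨ KB t s := by
  induction s generalizing t with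
  | nil => rcases t with _ | ⟨b, t⟩ <;> simp [kb_nil_of_ne_nil]
  | cons a s ih =>
    rcases t with _ | ⟨b, t⟩
    · exact Or.inl (kb_nil_of_ne_nil (List.cons_ne_nil a s))
    simp only [kb_cons_cons_iff, List.cons.injEq]
    rcases Nat.lt_trichotomy a b with h | rfl | h
    · exact Or.inl (Or.inl h)
    · rcases ih t with h | h | h <;> simp [h]
    · exact Or.inr (Or.inr (Or.inl h))

instance : IsStrictTotalOrder (List ℕ) KB where
  irrefl := kb_irrefl
  trans _ _ _ := kb_trans
  trichotomous s t hst hts := ((kb_trichotomous s t).resolve_left hst).resolve_right hts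

theorem kb_append_singleton_of_lt {c c' : ℕ} (h : c < c') (s e : List ℕ) :
    KB (s ++ [c]) (s ++ c' :: e) := by
  induction s with
  | nil => exact kb_cons_cons_iff.mpr (Or.inl h)
  | cons a s ih => exact kb_cons_cons_iff.mpr (Or.inr ⟨rfl, ih⟩)

theorem kb_append_self {e : List ℕ} (he : e ≠ []) (s : List ℕ) : KB (s ++ e) s :=
  Or.inl ⟨List.prefix_append s e, by simpa using he⟩

end KleeneBrouwer

section KBRank

noncomputable def kbRank (R : ℕ → Ordinal.{0}) : Ordinal.{0} → List ℕ → Ordinal.{0}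
  | cap, [] => ω ^ (cap + 1)
  | cap, c :: rest => ω ^ cap * c + kbRank R (R c) rest

variable {R : ℕ → Ordinal.{0}}

theorem kbRank_pos (cap : Ordinal) (l : List ℕ) : 0 < kbRank R cap l := by
  induction l generalizing cap with
  | nil => exact opow_pos _ omega0_pos
  | cons c rest ih => exact (ih (R c)).trans_le le_add_self

theorem natCast_add_one_lt_omega0 (c : ℕ) : (c : Ordinal) + 1 < ω := by
  exact_mod_cast natCast_lt_omega0 (c + 1)

theorem kbRank_cons_le_of_tail {cap : Ordinal} {c : ℕ} {rest : List ℕ} (hc : R c < cap)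
    (htail : kbRank R (R c) rest ≤ ω ^ (R c + 1)) :
    kbRank R cap (c :: rest) ≤ ω ^ cap * (c + 1) :=
  calc ω ^ cap * c + kbRank R (R c) rest
      ≤ ω ^ cap * c + ω ^ cap :=
        add_le_add_right (htail.trans (opow_le_opow_right omega0_pos (add_one_le_iff.mpr hc))) _
    _ = ω ^ cap * (c + 1) := by rw [mul_add_one]

theorem kbRank_le {cap : Ordinal} {l : List ℕ} (hl : (cap :: l.map R).IsChain (· > ·)) :
    kbRank R cap l ≤ ω ^ (cap + 1) := by
  induction l generalizing cap with
  | nil => exact le_rfl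
  | cons c rest ih =>
    rw [List.map_cons, List.isChain_cons_cons] at hl
    calc kbRank R cap (c :: rest) ≤ ω ^ cap * (c + 1) := kbRank_cons_le_of_tail hl.1 (ih hl.2)
      _ ≤ ω ^ cap * ω := mul_le_mul_right (natCast_add_one_lt_omega0 c).le _
      _ = ω ^ (cap + 1) := by rw [opow_add, opow_one]

theorem kbRank_cons_lt {cap : Ordinal} {c : ℕ} {rest : List ℕ}
    (hl : (cap :: (c :: rest).map R).IsChain (· > ·)) :
    kbRank R cap (c :: rest) < ω ^ (cap + 1) := by
  rw [List.map_cons, List.isChain_cons_cons] at hl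
  calc kbRank R cap (c :: rest)
      ≤ ω ^ cap * (c + 1) := kbRank_cons_le_of_tail hl.1 (kbRank_le hl.2)
    _ < ω ^ cap * ω :=
        (mul_lt_mul_iff_right₀ (opow_pos _ omega0_pos)).mpr (natCast_add_one_lt_omega0 c)
    _ = ω ^ (cap + 1) := by rw [opow_add, opow_one]

theorem kbRank_lt_kbRank {cap : Ordinal} {s t : List ℕ}
    (hs : (cap :: s.map R).IsChain (· > ·)) (ht : (cap :: t.map R).IsChain (· > ·))
    (hst : KB s t) : kbRank R cap s < kbRank R cap t := by
  induction s generalizing t cap with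
  | nil => exact absurd hst (not_kb_nil t)
  | cons c s ih =>
    rcases t with _ | ⟨d, t⟩
    · exact kbRank_cons_lt hs
    rw [List.map_cons, List.isChain_cons_cons] at hs ht
    rcases kb_cons_cons_iff.mp hst with hcd | ⟨rfl, hst'⟩
    · calc kbRank R cap (c :: s)
          ≤ ω ^ cap * (c + 1) := kbRank_cons_le_of_tail hs.1 (kbRank_le hs.2)
        _ ≤ ω ^ cap * d := mul_le_mul_right (by exact_mod_cast hcd) _
        _ < ω ^ cap * d + kbRank R (R d) t := lt_add_of_pos_right _ (kbRank_pos _ _)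
    · exact add_lt_add_right (ih hs.2 ht.2 hst') _

end KBRank

section OrdinalBounds

universe u

variable {α : Type u} {r : α → α → Prop} [IsWellOrder α r]

theorem typein_le_of_strictMono {m : α → Ordinal.{u}} (hm : ∀ a b, r a b → m a < m b) (a : α) :
    typein r a ≤ m a := by
  induction a using (IsWellFounded.wf (r := r)).induction with
  | _ a ih =>
    rw [← IsWellFounded.rank_eq_typein, IsWellFounded.rank_eq]
    refine Ordinal.iSup_le fun b => succ_le_of_lt ?_
    rw [IsWellFounded.rank_eq_typein]
    exact (ih b b.2).trans_lt (hm _ _ b.2)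

theorem type_le_of_forall_typein_lt {c : Ordinal.{u}} (h : ∀ a, typein r a < c) :
    type r ≤ c := by
  by_contra! hc
  obtain ⟨a, ha⟩ := typein_surj r hc
  exact (h a).ne ha

theorem type_lt_type_of_relEmbedding_lt {β : Type u} {s : β → β → Prop} [IsWellOrder β s]
    (f : r ↪r s) {b : β} (hb : ∀ a, s (f a) b) :
    type r < type s :=
  (type_le_of_forall_typein_lt fun a =>
    (typein_le_of_strictMono (m := fun a => typein s (f a))
      (fun _ _ h => (typein_lt_typein s).mpr (f.map_rel_iff.mpr h)) a).trans_lt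
      ((typein_lt_typein s).mpr (hb a))).trans_lt (typein_lt_type s b)

end OrdinalBounds

section KBOnSet

variable {T : Set (List ℕ)}

theorem isWellOrder_kb (hwf : WellFounded (Subrel KB (· ∈ T))) :
    IsWellOrder T (Subrel KB (· ∈ T)) :=
  { wf := hwf, trichotomous := Std.Trichotomous.trichotomous }

variable {R : ℕ → Ordinal.{0}} {cap : Ordinal.{0}}

theorem wellFounded_kb_of_isChain (h : ∀ s ∈ T, (cap :: s.map R).IsChain (· > ·)) :
    WellFounded (Subrel KB (· ∈ T)) :=
  Subrelation.wf (fun {s t} hst => kbRank_lt_kbRank (h s s.2) (h t t.2) hst)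
    (InvImage.wf (fun s : T => kbRank R cap s.1) wellFounded_lt)

theorem type_kb_le_of_isChain [IsWellOrder T (Subrel KB (· ∈ T))]
    (h : ∀ s ∈ T, (cap :: s.map R).IsChain (· > ·)) :
    type (Subrel KB (· ∈ T)) ≤ ω ^ (cap + 1) + 1 :=
  type_le_of_forall_typein_lt fun s =>
    (typein_le_of_strictMono (r := Subrel KB (· ∈ T))
      (fun s t hst => kbRank_lt_kbRank (h s s.2) (h t t.2) hst) s).trans_lt
      (lt_add_one_iff.mpr (kbRank_le (h s s.2)))

end KBOnSet

section KBLowerBound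

variable (T : Set (List ℕ)) [IsWellOrder T (Subrel KB (· ∈ T))]

open Classical in
noncomputable def kbIndex (s : List ℕ) : Ordinal.{0} :=
  if h : s ∈ T then typein (Subrel KB (· ∈ T)) ⟨s, h⟩ else 0

variable {T}

theorem kbIndex_lt_kbIndex {s t : List ℕ} (hs : s ∈ T) (ht : t ∈ T) (hst : KB s t) :
    kbIndex T s < kbIndex T t := by
  rw [kbIndex, kbIndex, dif_pos hs, dif_pos ht]
  exact (typein_lt_typein _).mpr hst

theorem kbIndex_lt_type {s : List ℕ} (hs : s ∈ T) :
    kbIndex T s < type (Subrel KB (· ∈ T)) := by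
  rw [kbIndex, dif_pos hs]
  exact typein_lt_type _ _

variable {S : Set (List ℕ)} {cap : List ℕ → Ordinal.{0}}

theorem exists_child_add_opow_mul_le (hST : S ⊆ T)
    (hext : ∀ s ∈ S, ∀ γ < cap s, ∀ M : ℕ, ∃ c, M < c ∧ s ++ [c] ∈ S ∧ γ ≤ cap (s ++ [c]))
    {γ : Ordinal.{0}} (ih : ∀ s ∈ S, γ ≤ cap s → ∀ o, (∀ d ∈ T, s <+: d → o ≤ kbIndex T d) →
      o + ω ^ γ ≤ kbIndex T s + 1)
    {s : List ℕ} (hs : s ∈ S) (hγ : γ < cap s) {o : Ordinal.{0}}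
    (ho : ∀ d ∈ T, s <+: d → o ≤ kbIndex T d) (m : ℕ) :
    ∃ c, s ++ [c] ∈ S ∧ o + ω ^ γ * (m + 1) ≤ kbIndex T (s ++ [c]) + 1 := by
  induction m with
  | zero =>
    obtain ⟨c, -, hcS, hcap⟩ := hext s hs γ hγ 0
    refine ⟨c, hcS, ?_⟩
    simpa using ih (s ++ [c]) hcS hcap o
      fun d hd hsd => ho d hd ((List.prefix_append s [c]).trans hsd)
  | succ m ihm =>
    obtain ⟨c, hcS, hc⟩ := ihm
    obtain ⟨c', hcc', hc'S, hcap⟩ := hext s hs γ hγ c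
    have hbelow : ∀ d ∈ T, s ++ [c'] <+: d → kbIndex T (s ++ [c]) + 1 ≤ kbIndex T d := by
      rintro d hd ⟨e, rfl⟩
      refine add_one_le_of_lt (kbIndex_lt_kbIndex (hST hcS) hd ?_)
      simpa using kb_append_singleton_of_lt hcc' s e
    refine ⟨c', hc'S, ?_⟩
    calc o + ω ^ γ * ((m + 1 : ℕ) + 1) = o + ω ^ γ * (m + 1) + ω ^ γ := by
          push_cast; rw [mul_add_one, add_assoc]
      _ ≤ kbIndex T (s ++ [c]) + 1 + ω ^ γ := add_le_add_left hc _
      _ ≤ kbIndex T (s ++ [c']) + 1 := ih _ hc'S hcap _ hbelow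

/-- Read with `o` the least index of a node extending `s`: the nodes extending `s` form a
`KB`-interval ending at `s`, and its order type is at least `ω ^ γ`. -/
theorem add_opow_le_kbIndex_add_one (hST : S ⊆ T)
    (hext : ∀ s ∈ S, ∀ γ < cap s, ∀ M : ℕ, ∃ c, M < c ∧ s ++ [c] ∈ S ∧ γ ≤ cap (s ++ [c]))
    (γ : Ordinal.{0}) : ∀ s ∈ S, γ ≤ cap s → ∀ o, (∀ d ∈ T, s <+: d → o ≤ kbIndex T d) →
      o + ω ^ γ ≤ kbIndex T s + 1 := by
  induction γ using Ordinal.limitRecOn with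
  | zero =>
    intro s hs _ o ho
    simpa using add_le_add_left (ho s (hST hs) (List.prefix_refl s)) 1
  | add_one γ ih =>
    intro s hs hγ o ho
    refine le_add_right ((add_le_iff_of_isSuccLimit
      (isSuccLimit_opow_left isSuccLimit_omega0 (zero_lt_one.trans_le le_add_self).ne')).mpr
        fun b hb => ?_)
    rw [opow_add, opow_one] at hb
    obtain ⟨x, hx, hbx⟩ := (lt_mul_iff_of_isSuccLimit isSuccLimit_omega0).mp hb
    obtain ⟨m, rfl⟩ := lt_omega0.mp hx
    obtain ⟨c, hcS, hc⟩ :=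
      exists_child_add_opow_mul_le hST hext ih hs ((lt_add_one γ).trans_le hγ) ho m
    calc o + b ≤ o + ω ^ γ * (m + 1) :=
          add_le_add_right (hbx.le.trans (mul_le_mul_right (le_add_right le_rfl) _)) o
      _ ≤ kbIndex T (s ++ [c]) + 1 := hc
      _ ≤ kbIndex T s :=
          add_one_le_of_lt (kbIndex_lt_kbIndex (hST hcS) (hST hs) (kb_append_self (by simp) s))
  | limit γ hγ ih =>
    intro s hs hcap o ho
    refine (add_le_iff_of_isSuccLimit (isSuccLimit_opow_left isSuccLimit_omega0 hγ.ne_bot)).mpr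
      fun b hb => ?_
    obtain ⟨γ', hγ', hb'⟩ := (lt_opow_of_isSuccLimit omega0_ne_zero hγ).mp hb
    exact (add_le_add_right hb'.le o).trans (ih γ' hγ' s hs (hγ'.le.trans hcap) o ho)

theorem opow_lt_type_kb (hST : S ⊆ T)
    (hext : ∀ s ∈ S, ∀ γ < cap s, ∀ M : ℕ, ∃ c, M < c ∧ s ++ [c] ∈ S ∧ γ ≤ cap (s ++ [c]))
    (hnil : [] ∈ S) {δ : Ordinal.{0}} (hδ : δ ≠ 0) (hcap : δ ≤ cap []) :
    ω ^ δ < type (Subrel KB (· ∈ T)) := by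
  have h := add_opow_le_kbIndex_add_one hST hext δ [] hnil hcap 0 fun _ _ _ => zero_le
  rw [zero_add, ← succ_eq_add_one,
    (isSuccLimit_opow_left isSuccLimit_omega0 hδ).le_succ_iff] at h
  exact h.trans_lt (kbIndex_lt_type (hST hnil))

end KBLowerBound

section NatOrdBasics

abbrev NatOrd.rel (A : NatOrd) : A.1 → A.1 → Prop := Subrel A.2 (· ∈ A.1)

variable {A : NatOrd}

theorem isLinN_of_isStrictTotalOrder [IsStrictTotalOrder A.1 A.rel] : IsLinN A :=
  ⟨fun a ha b hb c hc => IsTrans.trans (r := A.rel) ⟨a, ha⟩ ⟨b, hb⟩ ⟨c, hc⟩,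
    fun a ha => Std.Irrefl.irrefl (r := A.rel) ⟨a, ha⟩,
    fun a ha b hb =>
      (trichotomous_of A.rel ⟨a, ha⟩ ⟨b, hb⟩).imp_right (Or.imp_left (congrArg Subtype.val))⟩

theorem isLinN_of_relEmbedding {β : Type*} {s : β → β → Prop} [IsStrictTotalOrder β s]
    (f : A.rel ↪r s) : IsLinN A :=
  have := f.isStrictTotalOrder
  isLinN_of_isStrictTotalOrder

theorem IsLinN.isStrictTotalOrder (hA : IsLinN A) : IsStrictTotalOrder A.1 A.rel where
  irrefl a := hA.2.1 a.1 a.2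
  trans a b c := hA.1 a.1 a.2 b.1 b.2 c.1 c.2
  trichotomous a b hab hba :=
    Subtype.ext (((hA.2.2 a.1 a.2 b.1 b.2).resolve_left hab).resolve_right hba)

theorem IsWON.isWellOrder (hA : IsWON A) : IsWellOrder A.1 A.rel :=
  have := hA.1.isStrictTotalOrder
  { wf := hA.2, trichotomous := Std.Trichotomous.trichotomous }

theorem isWON_of_relEmbedding {β : Type*} {s : β → β → Prop} [IsWellOrder β s]
    (f : A.rel ↪r s) : IsWON A :=
  have := f.isWellOrder
  ⟨isLinN_of_isStrictTotalOrder, (IsWellFounded.wf : WellFounded A.rel)⟩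

theorem isWON_of_isWellOrder [IsWellOrder A.1 A.rel] : IsWON A :=
  isWON_of_relEmbedding (RelEmbedding.refl A.rel)

theorem IsLinN.nonempty_natGT_embedding_of_not_wfn (hA : IsLinN A) (h : ¬WFN A) :
    Nonempty (((· > ·) : ℕ → ℕ → Prop) ↪r A.rel) := by
  have := hA.isStrictTotalOrder
  change ¬WellFounded A.rel at h
  rwa [RelEmbedding.wellFounded_iff_isEmpty, not_isEmpty_iff] at h

theorem type_ne_zero_of_nonempty [IsWellOrder A.1 A.rel] (hA : A.1.Nonempty) :
    type A.rel ≠ 0 :=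
  type_ne_zero_iff_nonempty.mpr hA.to_subtype

theorem nonempty_principalSeg_of_type_lt {B : NatOrd} [IsWellOrder A.1 A.rel]
    [IsWellOrder B.1 B.rel] (h : type A.rel < type B.rel) :
    Nonempty (PrincipalSeg (Subrel A.2 A.1) (Subrel B.2 B.1)) :=
  (type_lt_iff (r := A.rel) (s := B.rel)).mp h

open Classical in
noncomputable def NatOrd.rank (A : NatOrd) [IsWellOrder A.1 A.rel] (x : ℕ) :
    Ordinal.{0} :=
  if h : x ∈ A.1 then typein A.rel ⟨x, h⟩ else 0

theorem NatOrd.rank_of_mem [IsWellOrder A.1 A.rel] {x : ℕ} (hx : x ∈ A.1) :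
    A.rank x = typein A.rel ⟨x, hx⟩ :=
  dif_pos hx

end NatOrdBasics

section Rationals

variable {q : ℕ → ℚ}

noncomputable def ratOrdNatGTEmbedding (hq : Function.Surjective q) :
    ((· > ·) : ℕ → ℕ → Prop) ↪r (ratOrd q).rel where
  toFun j := ⟨Function.surjInv hq (-j), trivial⟩
  inj' a b h := by
    simpa [Function.surjInv_eq hq] using congrArg (fun x : (ratOrd q).1 => q x.1) h
  map_rel_iff' {a b} := by
    show q (Function.surjInv hq (-a)) < q (Function.surjInv hq (-b)) ↔ b < a
    simp [Function.surjInv_eq hq]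

end Rationals

section SumAndSigma

theorem pair_mem_addOrd_iff {A B : NatOrd} {i a : ℕ} :
    Nat.pair i a ∈ (addOrd A B).1 ↔ (i = 0 ∧ a ∈ A.1) ∨ (i = 1 ∧ a ∈ B.1) := by
  simp [addOrd]

theorem addOrd_rel_pair_pair {A B : NatOrd} {i j a b : ℕ} :
    (addOrd A B).2 (Nat.pair i a) (Nat.pair j b) ↔
      i < j ∨ (i = 0 ∧ j = 0 ∧ A.2 a b) ∨ (i = 1 ∧ j = 1 ∧ B.2 a b) := by
  simp [addOrd]

def addOrdRelEmbedding (A B : NatOrd) : Sum.Lex A.rel B.rel ↪r (addOrd A B).rel where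
  toFun := Sum.elim (fun a => ⟨Nat.pair 0 a.1, pair_mem_addOrd_iff.mpr (Or.inl ⟨rfl, a.2⟩)⟩)
    (fun b => ⟨Nat.pair 1 b.1, pair_mem_addOrd_iff.mpr (Or.inr ⟨rfl, b.2⟩)⟩)
  inj' := by
    rintro (a | a) (b | b) h <;>
      have h' := congrArg (fun z : (addOrd A B).1 => z.1.unpair) h <;>
      simp [Subtype.ext_iff] at h' ⊢ <;> exact h'
  map_rel_iff' := by
    rintro (a | a) (b | b) <;> exact addOrd_rel_pair_pair.trans (by simp)

theorem addOrdRelEmbedding_surjective (A B : NatOrd) :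
    Function.Surjective (addOrdRelEmbedding A B) := by
  rintro ⟨x, ⟨h0, hx⟩ | ⟨h1, hx⟩⟩
  · exact ⟨Sum.inl ⟨_, hx⟩, Subtype.ext (by simp [addOrdRelEmbedding, ← h0])⟩
  · exact ⟨Sum.inr ⟨_, hx⟩, Subtype.ext (by simp [addOrdRelEmbedding, ← h1])⟩

noncomputable def addOrdRelIso (A B : NatOrd) : Sum.Lex A.rel B.rel ≃r (addOrd A B).rel :=
  RelIso.ofSurjective _ (addOrdRelEmbedding_surjective A B)

theorem isWON_addOrd {A B : NatOrd} (hA : IsWON A) (hB : IsWON B) : IsWON (addOrd A B) :=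
  have := hA.isWellOrder
  have := hB.isWellOrder
  isWON_of_relEmbedding (addOrdRelIso A B).symm.toRelEmbedding

theorem type_addOrd {A B : NatOrd} [IsWellOrder A.1 A.rel]
    [IsWellOrder B.1 B.rel] [IsWellOrder (addOrd A B).1 (addOrd A B).rel] :
    type (addOrd A B).rel = type A.rel + type B.rel :=
  (addOrdRelIso A B).ordinalType_congr.symm.trans (type_sum_lex _ _)

variable {L : ℕ → NatOrd}

theorem pair_mem_sigmaOrd_iff {n a : ℕ} : Nat.pair n a ∈ (sigmaOrd L).1 ↔ a ∈ (L n).1 := by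
  simp [sigmaOrd]

theorem sigmaOrd_rel_pair_pair {i j a b : ℕ} :
    (sigmaOrd L).2 (Nat.pair i a) (Nat.pair j b) ↔ i < j ∨ (i = j ∧ (L i).2 a b) := by
  simp [sigmaOrd]

theorem isLinN_sigmaOrd (hL : ∀ n, IsLinN (L n)) : IsLinN (sigmaOrd L) := by
  refine ⟨?_, ?_, ?_⟩
  · rintro a ha b hb c hc (h | ⟨he, hr⟩) (h' | ⟨he', hr'⟩)
    · exact Or.inl (h.trans h')
    · exact Or.inl (he' ▸ h)
    · exact Or.inl (he ▸ h')
    · have hb' : b.unpair.2 ∈ (L a.unpair.1).1 := by rw [he]; exact hb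
      have hc' : c.unpair.2 ∈ (L a.unpair.1).1 := by rw [he, he']; exact hc
      exact Or.inr ⟨he.trans he', (hL _).1 _ ha _ hb' _ hc' hr (he ▸ hr')⟩
  · rintro a ha (h | ⟨-, hr⟩)
    · exact h.false
    · exact (hL _).2.1 _ ha hr
  · intro a ha b hb
    rcases Nat.lt_trichotomy a.unpair.1 b.unpair.1 with h | h | h
    · exact Or.inl (Or.inl h)
    · have hb' : b.unpair.2 ∈ (L a.unpair.1).1 := by rw [h]; exact hb
      rcases (hL _).2.2 _ ha _ hb' with h' | h' | h'
      · exact Or.inl (Or.inr ⟨h, h'⟩)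
      · exact Or.inr (Or.inl (by rw [← Nat.pair_unpair a, ← Nat.pair_unpair b, h, h']))
      · exact Or.inr (Or.inr (Or.inr ⟨h.symm, h ▸ h'⟩))
    · exact Or.inr (Or.inr (Or.inl h))

theorem wfn_sigmaOrd (hL : ∀ n, WFN (L n)) : WFN (sigmaOrd L) := by
  have hlex := WellFounded.psigma_lex (β := fun _ : ℕ => ℕ) wellFounded_lt
    fun n => Set.wellFoundedOn_iff.mp (hL n)
  refine Subrelation.wf (fun {x y} hxy => ?_)
    (InvImage.wf (fun x : (sigmaOrd L).1 => (⟨x.1.unpair.1, x.1.unpair.2⟩ : Σ' _ : ℕ, ℕ))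
      hlex)
  rcases hxy with h | ⟨he, h⟩
  · exact PSigma.Lex.left _ _ h
  · simp only [InvImage, he]
    exact PSigma.Lex.right _ ⟨he ▸ h, he ▸ x.2, y.2⟩

theorem type_lt_type_sigmaOrd [∀ n, IsWellOrder (L n).1 (L n).rel]
    [IsWellOrder (sigmaOrd L).1 (sigmaOrd L).rel] {n m : ℕ} (hnm : n < m)
    {w : ℕ} (hw : w ∈ (L m).1) : type (L n).rel < type (sigmaOrd L).rel := by
  let f : (L n).rel ↪r (sigmaOrd L).rel :=
    { toFun a := ⟨Nat.pair n a.1, pair_mem_sigmaOrd_iff.mpr a.2⟩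
      inj' a b h := by simpa [Subtype.ext_iff] using h
      map_rel_iff' := sigmaOrd_rel_pair_pair.trans (by simp) }
  exact type_lt_type_of_relEmbedding_lt f
    (b := ⟨Nat.pair m w, pair_mem_sigmaOrd_iff.mpr hw⟩)
    fun _ => sigmaOrd_rel_pair_pair.mpr (Or.inl hnm)

end SumAndSigma

section DoubleDescentTree

variable {X Y : Set ℕ} {rX rY : ℕ → ℕ → Prop}

theorem mem_DDT_iff {l : List ℕ} :
    l ∈ DDT X Y rX rY ↔ (∀ x ∈ l, x.unpair.1 ∈ X ∧ x.unpair.2 ∈ Y) ∧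
      l.IsChain (fun a b => rX b.unpair.1 a.unpair.1 ∧ rY b.unpair.2 a.unpair.2) := by
  simp +contextual [DDT, List.isChain_iff_getElem, List.forall_mem_iff_getElem,
    Nat.lt_of_succ_lt]

theorem nil_mem_DDT : [] ∈ DDT X Y rX rY :=
  mem_DDT_iff.mpr ⟨by simp, List.IsChain.nil⟩

theorem append_singleton_mem_DDT {s : List ℕ} (hs : s ∈ DDT X Y rX rY) {x : ℕ}
    (hx : x.unpair.1 ∈ X ∧ x.unpair.2 ∈ Y)
    (hlast : ∀ y ∈ s.getLast?, rX x.unpair.1 y.unpair.1 ∧ rY x.unpair.2 y.unpair.2) :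
    s ++ [x] ∈ DDT X Y rX rY := by
  obtain ⟨hmem, hchain⟩ := mem_DDT_iff.mp hs
  refine mem_DDT_iff.mpr ⟨fun y hy => ?_, hchain.append (List.IsChain.singleton x) ?_⟩
  · rcases List.mem_append.mp hy with hy | hy
    · exact hmem y hy
    · exact (List.mem_singleton.mp hy) ▸ hx
  · intro y hy x' hx'
    obtain rfl : x = x' := by simpa using hx'
    exact hlast y hy

end DoubleDescentTree

section DoubleDescentOrder

noncomputable def ddStarRelIso (A B : NatOrd) :
    Subrel KB (· ∈ DDT A.1 B.1 A.2 B.2) ≃r (ddStar A B).rel where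
  toEquiv := Equiv.Set.image listCode _ Encodable.encode_injective
  map_rel_iff' {s t} :=
    ⟨fun ⟨_, _, _, _, hs, ht, h⟩ => by
      rwa [Encodable.encode_injective hs, Encodable.encode_injective ht] at h,
      fun h => ⟨s, s.2, t, t.2, rfl, rfl, h⟩⟩

theorem ddStar_nonempty (A B : NatOrd) : (ddStar A B).1.Nonempty :=
  ⟨listCode [], [], nil_mem_DDT, rfl⟩

theorem isLinN_ddStar (A B : NatOrd) : IsLinN (ddStar A B) :=
  isLinN_of_relEmbedding
    ((ddStarRelIso A B).symm.toRelEmbedding.trans (Subrel.relEmbedding KB _))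

variable {A B : NatOrd}

theorem isChain_rank_of_isChain [IsWellOrder A.1 A.rel] (p : ℕ → ℕ) {l : List ℕ}
    (hmem : ∀ x ∈ l, p x ∈ A.1) (hl : l.IsChain fun a b => A.2 (p b) (p a)) :
    (type A.rel :: l.map (A.rank ∘ p)).IsChain (· > ·) := by
  refine List.isChain_cons.mpr ⟨?_, (List.isChain_map _).mpr (hl.imp_of_mem_imp ?_)⟩
  · intro y hy
    obtain ⟨x, hx, rfl⟩ : ∃ x ∈ l, (A.rank ∘ p) x = y := by
      simpa using List.mem_of_mem_head? hy
    simpa [NatOrd.rank_of_mem (hmem x hx)] using typein_lt_type A.rel _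
  · intro a b ha hb hab
    simp only [Function.comp, NatOrd.rank_of_mem (hmem a ha), NatOrd.rank_of_mem (hmem b hb)]
    exact (typein_lt_typein A.rel).mpr hab

theorem isChain_rank_fst_of_mem_DDT [IsWellOrder A.1 A.rel] {s : List ℕ}
    (hs : s ∈ DDT A.1 B.1 A.2 B.2) :
    (type A.rel :: s.map (A.rank ∘ fun x => x.unpair.1)).IsChain (· > ·) :=
  have h := mem_DDT_iff.mp hs
  isChain_rank_of_isChain _ (fun x hx => (h.1 x hx).1) (h.2.imp fun _ _ hab => hab.1)

theorem isChain_rank_snd_of_mem_DDT [IsWellOrder B.1 B.rel] {s : List ℕ}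
    (hs : s ∈ DDT A.1 B.1 A.2 B.2) :
    (type B.rel :: s.map (B.rank ∘ fun x => x.unpair.2)).IsChain (· > ·) :=
  have h := mem_DDT_iff.mp hs
  isChain_rank_of_isChain _ (fun x hx => (h.1 x hx).2) (h.2.imp fun _ _ hab => hab.2)

theorem isWON_ddStar_of_left (hA : IsWON A) : IsWON (ddStar A B) :=
  have := hA.isWellOrder
  ⟨isLinN_ddStar A B, (ddStarRelIso A B).symm.toRelEmbedding.wellFounded
    (wellFounded_kb_of_isChain fun _ => isChain_rank_fst_of_mem_DDT)⟩

theorem isWON_ddStar_of_right (hB : IsWON B) : IsWON (ddStar A B) :=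
  have := hB.isWellOrder
  ⟨isLinN_ddStar A B, (ddStarRelIso A B).symm.toRelEmbedding.wellFounded
    (wellFounded_kb_of_isChain fun _ => isChain_rank_snd_of_mem_DDT)⟩

theorem type_ddStar_le_of_right [IsWellOrder B.1 B.rel]
    [IsWellOrder (ddStar A B).1 (ddStar A B).rel] :
    type (ddStar A B).rel ≤ ω ^ (type B.rel + 1) + 1 := by
  have hchain : ∀ s ∈ DDT A.1 B.1 A.2 B.2, _ := fun _ => isChain_rank_snd_of_mem_DDT
  have := isWellOrder_kb (wellFounded_kb_of_isChain hchain)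
  rw [← (ddStarRelIso A B).ordinalType_congr]
  exact type_kb_le_of_isChain hchain

end DoubleDescentOrder

section LowerBound

theorem opow_type_lt_type_kb {W C : NatOrd} [IsWellOrder W.1 W.rel] (hW : W.1.Nonempty)
    (e : ((· > ·) : ℕ → ℕ → Prop) ↪r C.rel) {T : Set (List ℕ)}
    [IsWellOrder T (Subrel KB (· ∈ T))]
    (mk : ℕ → ℕ → ℕ) (pW pC : ℕ → ℕ) (hpW : ∀ w c, pW (mk w c) = w)
    (hpC : ∀ w c, pC (mk w c) = c) (hnil : [] ∈ T)
    (happend : ∀ s ∈ T, ∀ w ∈ W.1, ∀ c ∈ C.1,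
      (∀ x ∈ s.getLast?, W.2 w (pW x) ∧ C.2 c (pC x)) → s ++ [mk w c] ∈ T) :
    ω ^ type W.rel < type (Subrel KB (· ∈ T)) := by
  let S : Set (List ℕ) := {s | s ∈ T ∧ ∀ x ∈ s.getLast?, pW x ∈ W.1 ∧ ∃ j, pC x = e j}
  let cap : List ℕ → Ordinal := fun s => s.getLast?.elim (type W.rel) (W.rank ∘ pW)
  refine opow_lt_type_kb (S := S) (cap := cap) (fun s hs => hs.1) ?_ ⟨hnil, by simp⟩
    (type_ne_zero_of_nonempty hW) le_rfl
  rintro s ⟨hsT, hlast⟩ γ hγ M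
  obtain ⟨w, hw, hwγ, hwlast, N, hN⟩ : ∃ w ∈ W.1, W.rank w = γ ∧
      (∀ x ∈ s.getLast?, W.2 w (pW x)) ∧ ∃ N, ∀ j ≥ N, ∀ x ∈ s.getLast?, C.2 (e j) (pC x) := by
    cases h : s.getLast? with
    | none =>
      simp only [cap, h, Option.elim] at hγ
      obtain ⟨b, rfl⟩ := typein_surj W.rel hγ
      exact ⟨b.1, b.2, NatOrd.rank_of_mem b.2, by simp, 0, by simp⟩
    | some x =>
      obtain ⟨hxW, j₀, hj₀⟩ := hlast x h
      simp only [cap, h, Option.elim, Function.comp, NatOrd.rank_of_mem hxW] at hγ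
      obtain ⟨b, rfl⟩ := typein_surj W.rel (hγ.trans (typein_lt_type _ _))
      refine ⟨b.1, b.2, NatOrd.rank_of_mem b.2, by simpa using (typein_lt_typein W.rel).mp hγ,
        j₀ + 1, fun j hj => ?_⟩
      simpa [hj₀] using e.map_rel_iff.mpr (show j > j₀ by omega)
  have hinj : Function.Injective fun j => mk w (e j) := fun j k h =>
    e.injective (Subtype.ext (by simpa [hpC] using congrArg pC h))
  obtain ⟨j, hMj, hNj⟩ :=
    ((hinj.nat_tendsto_atTop.eventually_gt_atTop M).and (Filter.eventually_ge_atTop N)).exists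
  refine ⟨mk w (e j), hMj,
    ⟨happend s hsT w hw _ (e j).2 fun x hx => ⟨hwlast x hx, hN j hNj x hx⟩, ?_⟩, ?_⟩
  · simpa [hpW, hpC] using ⟨hw, j, rfl⟩
  · simp [cap, hpW, hwγ]

variable {A B : NatOrd}

theorem opow_type_lt_type_ddStar_of_left [IsWellOrder A.1 A.rel]
    [IsWellOrder (ddStar A B).1 (ddStar A B).rel] (hA : A.1.Nonempty)
    (e : ((· > ·) : ℕ → ℕ → Prop) ↪r B.rel) : ω ^ type A.rel < type (ddStar A B).rel := by
  have := isWellOrder_kb ((ddStarRelIso A B).toRelEmbedding.wellFounded IsWellFounded.wf)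
  rw [← (ddStarRelIso A B).ordinalType_congr]
  exact opow_type_lt_type_kb hA e Nat.pair (·.unpair.1) (·.unpair.2) (by simp) (by simp)
    nil_mem_DDT fun s hs w hw c hc h =>
      append_singleton_mem_DDT hs (by simpa using ⟨hw, hc⟩) (by simpa using h)

theorem opow_type_lt_type_ddStar_of_right [IsWellOrder B.1 B.rel]
    [IsWellOrder (ddStar A B).1 (ddStar A B).rel] (hB : B.1.Nonempty)
    (e : ((· > ·) : ℕ → ℕ → Prop) ↪r A.rel) : ω ^ type B.rel < type (ddStar A B).rel := by
  have := isWellOrder_kb ((ddStarRelIso A B).toRelEmbedding.wellFounded IsWellFounded.wf)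
  rw [← (ddStarRelIso A B).ordinalType_congr]
  exact opow_type_lt_type_kb hB e (fun w c => Nat.pair c w) (·.unpair.2) (·.unpair.1) (by simp)
    (by simp) nil_mem_DDT fun s hs w hw c hc h =>
      append_singleton_mem_DDT hs (by simpa using ⟨hc, hw⟩) (by simpa [and_comm] using h)

theorem type_lt_type_ddStar_of_right [IsWellOrder B.1 B.rel]
    [IsWellOrder (ddStar A B).1 (ddStar A B).rel] (hB : B.1.Nonempty)
    (e : ((· > ·) : ℕ → ℕ → Prop) ↪r A.rel) : type B.rel < type (ddStar A B).rel :=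
  (right_le_opow _ one_lt_omega0).trans_lt (opow_type_lt_type_ddStar_of_right hB e)

end LowerBound

section Comparisons

variable {X Y : NatOrd}

theorem type_ddStar_le_type_ddStar_ratOrd_ddStar {q : ℕ → ℚ} (hq : Function.Surjective q)
    {V : NatOrd} (hY : IsWON Y) (hYne : Y.1.Nonempty) (e : ((· > ·) : ℕ → ℕ → Prop) ↪r X.rel)
    [IsWellOrder (ddStar V Y).1 (ddStar V Y).rel]
    [IsWellOrder (ddStar (ddStar (ratOrd q) Y) X).1 (ddStar (ddStar (ratOrd q) Y) X).rel] :
    type (ddStar V Y).rel ≤ type (ddStar (ddStar (ratOrd q) Y) X).rel := by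
  have := hY.isWellOrder
  have := (isWON_ddStar_of_right (A := ratOrd q) hY).isWellOrder
  calc type (ddStar V Y).rel ≤ ω ^ (type Y.rel + 1) + 1 := type_ddStar_le_of_right
    _ ≤ ω ^ type (ddStar (ratOrd q) Y).rel + 1 :=
        add_le_add_left (opow_le_opow_right omega0_pos
          (add_one_le_of_lt (type_lt_type_ddStar_of_right hYne (ratOrdNatGTEmbedding hq)))) 1
    _ ≤ type (ddStar (ddStar (ratOrd q) Y) X).rel :=
        add_one_le_of_lt (opow_type_lt_type_ddStar_of_left (ddStar_nonempty _ _) e)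

theorem type_lt_type_ddStar_addOrd {U : NatOrd} [IsWellOrder U.1 U.rel] (hX : IsWON X)
    (hXne : X.1.Nonempty) (e : ((· > ·) : ℕ → ℕ → Prop) ↪r Y.rel)
    [IsWellOrder (ddStar (addOrd U X) Y).1 (ddStar (addOrd U X) Y).rel] :
    type U.rel < type (ddStar (addOrd U X) Y).rel := by
  have := hX.isWellOrder
  have := (isWON_addOrd (isWON_of_isWellOrder (A := U)) hX).isWellOrder
  calc type U.rel < type U.rel + type X.rel :=
        lt_add_of_pos_right _ (type_ne_zero_of_nonempty hXne).bot_lt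
    _ = type (addOrd U X).rel := type_addOrd.symm
    _ ≤ ω ^ type (addOrd U X).rel := right_le_opow _ one_lt_omega0
    _ < type (ddStar (addOrd U X) Y).rel := opow_type_lt_type_ddStar_of_left
        ⟨_, pair_mem_addOrd_iff.mpr (Or.inr ⟨rfl, hXne.some_mem⟩)⟩ e

end Comparisons

/-- If `(X_n)`, `(Y_n)` are sequences of nonempty linear orders on
subsets of ℕ such that for every `n` at least one of `X_n`, `Y_n` is well-founded,
and `U = Σ_n (ℚ_q*Y_n)*X_n`, `Z_n = (U + X_n)*Y_n`, then each `Z_n` is a well order;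
if `X_n` is not well-founded then `|Z_n| < |U|`, and if `Y_n` is not well-founded then
`|U| < |Z_n|` (strict comparisons as principal segment embeddings). -/
theorem Zord_comparisons (q : ℕ → ℚ) (hq : Function.Bijective q)
    (X Y : ℕ → NatOrd) (hX : ∀ n, IsLinN (X n)) (hY : ∀ n, IsLinN (Y n))
    (hXne : ∀ n, (X n).1.Nonempty) (hYne : ∀ n, (Y n).1.Nonempty)
    (h : ∀ n, WFN (X n) ∨ WFN (Y n)) :
    ∀ n, IsWON (Zord q X Y n) ∧
      (¬WFN (X n) →
        Nonempty (PrincipalSeg (Subrel (Zord q X Y n).2 (Zord q X Y n).1)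
          (Subrel (Uord q X Y).2 (Uord q X Y).1))) ∧
      (¬WFN (Y n) →
        Nonempty (PrincipalSeg (Subrel (Uord q X Y).2 (Uord q X Y).1)
          (Subrel (Zord q X Y n).2 (Zord q X Y n).1))) := by
  intro n
  unfold Zord Uord
  set W : ℕ → NatOrd := fun k => ddStar (ddStar (ratOrd q) (Y k)) (X k)
  set U := sigmaOrd W
  have hW : ∀ k, IsWON (W k) := fun k =>
    (h k).elim (fun hXk => isWON_ddStar_of_right ⟨hX k, hXk⟩)
      fun hYk => isWON_ddStar_of_left (isWON_ddStar_of_right ⟨hY k, hYk⟩)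
  have hU : IsWON U := ⟨isLinN_sigmaOrd fun k => (hW k).1, wfn_sigmaOrd fun k => (hW k).2⟩
  have hZ : IsWON (ddStar (addOrd U (X n)) (Y n)) :=
    (h n).elim (fun hXn => isWON_ddStar_of_left (isWON_addOrd hU ⟨hX n, hXn⟩))
      fun hYn => isWON_ddStar_of_right ⟨hY n, hYn⟩
  have := fun k => (hW k).isWellOrder
  have := hU.isWellOrder
  have := hZ.isWellOrder
  refine ⟨hZ, fun hXn => nonempty_principalSeg_of_type_lt ?_,
    fun hYn => nonempty_principalSeg_of_type_lt ?_⟩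
  · obtain ⟨e⟩ := (hX n).nonempty_natGT_embedding_of_not_wfn hXn
    calc type (ddStar (addOrd U (X n)) (Y n)).rel ≤ type (W n).rel :=
          type_ddStar_le_type_ddStar_ratOrd_ddStar hq.2 ⟨hY n, (h n).resolve_left hXn⟩ (hYne n) e
      _ < type U.rel := type_lt_type_sigmaOrd n.lt_succ_self (ddStar_nonempty _ _).some_mem
  · obtain ⟨e⟩ := (hY n).nonempty_natGT_embedding_of_not_wfn hYn
    exact type_lt_type_ddStar_addOrd ⟨hX n, (h n).resolve_right hYn⟩ (hXne n) e
end

section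
/- For every nonempty well-founded tree T on ℕ (a tree with no branch), the rank of T is strictly less than the order type of the Kleene–Brouwer ordering of T. -/
/-- The "child" relation on the nodes of a tree `T`: `s` is an immediate (one-step)
extension of `t`. -/
def childRel (T : Set (List ℕ)) : ↥T → ↥T → Prop :=
  fun s t => ∃ n : ℕ, (s : List ℕ) = (t : List ℕ) ++ [n]

/-!
A child `s ++ [n]` of `s` extends it, so it is `<_KB`-below `s`: the child relation is
contained in `<_KB`. Rank is monotone in the relation, and the rank of a node under the
well-order `<_KB` is its position `typein`, which is below the order type.
-/

theorem Acc.rank_le_rank_of_subrelation {α : Type*} {r s : α → α → Prop}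
    (hrs : Subrelation r s) {a : α} (hr : Acc r a) (hs : Acc s a) :
    hr.rank ≤ hs.rank := by
  induction hr with
  | intro a _ ih =>
    rw [Acc.rank_eq]
    refine Ordinal.iSup_le fun ⟨b, hba⟩ => Order.succ_le_of_lt ?_
    exact (ih b hba (hs.inv (hrs hba))).trans_lt (hs.rank_lt_of_rel (hrs hba))

theorem KB_of_childRel {T : Set (List ℕ)} {s t : ↥T} (h : childRel T s t) :
    Subrel KB T s t := by
  obtain ⟨n, hn⟩ := h
  refine Or.inl ⟨⟨[n], hn.symm⟩, fun h => ?_⟩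
  simp [h] at hn

theorem rank_lt_type_KB_general (T : Set (List ℕ)) (hne : [] ∈ T)
    (hwf : WellFounded (childRel T))
    (hwo : IsWellOrder ↥T (Subrel KB T)) :
    (hwf.apply (⟨[], hne⟩ : ↥T)).rank < @Ordinal.type ↥T (Subrel KB T) hwo := by
  have := hwo
  let root : ↥T := ⟨[], hne⟩
  calc (hwf.apply root).rank
      ≤ IsWellFounded.rank (α := ↥T) (Subrel KB T) root :=
        Acc.rank_le_rank_of_subrelation KB_of_childRel _ _
    _ = Ordinal.typein (α := ↥T) (Subrel KB T) root := by rw [IsWellFounded.rank_eq_typein]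
    _ < Ordinal.type (α := ↥T) (Subrel KB T) := Ordinal.typein_lt_type _ _

/-- For every nonempty well-founded tree `T` on ℕ (no branches),
the rank of `T` (the rank of its root under the child relation, defined by
well-founded recursion) is strictly less than the order type of the Kleene–Brouwer
ordering of `T`. -/
theorem rank_lt_type_KB (T : Set (List ℕ)) (hT : IsTree T) (hne : [] ∈ T)
    (hnb : ∀ x : ℕ → ℕ, ¬IsBranch T x)
    (hwf : WellFounded (childRel T))
    (hwo : IsWellOrder ↥T (Subrel KB T)) :
    (hwf.apply (⟨[], hne⟩ : ↥T)).rank < @Ordinal.type ↥T (Subrel KB T) hwo :=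
  rank_lt_type_KB_general T hne hwf hwo
end
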